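/- arXiv:1209.5554 — 4 statements merged into one kernel-verified Lean document; each statement's English description precedes it below -/
import Mathlib

section
/- Let h̃ be the subalgebra of ĥ spanned by all modes a_m with m ≠ 0 and K, with K acting as the identity. If M is an h̃-module that is bounded below and its space of ground states M_gs = {v ∈ M : a_m v = 0 for all m > 0, a ∈ h} is zero, then M = 0. -/
/-!
If `x ≠ 0` and the only vector annihilated by all positive modes is `0`, then some positive
mode `a_m` does not kill `x`, some positive mode does not kill `a_m x`, and so on: for every `k`
there is a word of `k` positive modes not killing `x`. Its total degree is at least `k`, so for
`k` beyond the bound `N_x` this contradicts boundedness below.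
-/

namespace List

theorem exists_foldr_ne_zero_of_length_eq {ι M : Type*} [Zero M] (act : ι → M → M)
    (p : ι → Prop) (hgs : ∀ v : M, (∀ i, p i → act i v = 0) → v = 0) {x : M} (hx : x ≠ 0)
    (k : ℕ) : ∃ l : List ι, (∀ i ∈ l, p i) ∧ l.length = k ∧ l.foldr act x ≠ 0 := by
  induction k with
  | zero => exact ⟨[], by simp, rfl, hx⟩
  | succ k ih =>
    obtain ⟨l, hl, hlen, hne⟩ := ih
    obtain ⟨i, hi, hne'⟩ : ∃ i, p i ∧ act i (l.foldr act x) ≠ 0 := by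
      by_contra! h
      exact hne (hgs _ h)
    refine ⟨i :: l, ?_, by simp [hlen], hne'⟩
    simpa only [forall_mem_cons] using ⟨hi, hl⟩

theorem length_le_sum_of_pos {l : List ℤ} (h : ∀ m ∈ l, 0 < m) : (l.length : ℤ) ≤ l.sum := by
  simpa using l.card_nsmul_le_sum 1 h

end List

theorem bounded_below_no_ground_states_implies_zero_general
    {V M : Type} [AddCommGroup M] [Module ℂ M]
    (ρ : V → ℤ → Module.End ℂ M)
    (hbdd : ∀ x : M, ∃ N : ℤ, ∀ l : List (V × ℤ), l ≠ [] →
      N < (l.map Prod.snd).sum →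
      l.foldr (fun pr y => ρ pr.1 pr.2 y) x = 0)
    (hgs : ∀ v : M, (∀ (a : V) (m : ℤ), 0 < m → ρ a m v = 0) → v = 0) :
    ∀ x : M, x = 0 := by
  intro x
  by_contra hx
  obtain ⟨N, hN⟩ := hbdd x
  obtain ⟨l, hpos, hlen, hne⟩ :=
    List.exists_foldr_ne_zero_of_length_eq (fun pr y => ρ pr.1 pr.2 y) (fun pr => 0 < pr.2)
      (fun v hv => hgs v fun a m hm => hv (a, m) hm) hx (N.toNat + 1)
  have hnil : l ≠ [] := List.ne_nil_of_length_eq_add_one hlen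
  have hdeg : (l.length : ℤ) ≤ (l.map Prod.snd).sum := by
    simpa using List.length_le_sum_of_pos (l := l.map Prod.snd)
      (by simpa only [List.forall_mem_map] using hpos)
  exact hne (hN l hnil (by omega))

/-- Let `h̃` be the subalgebra of the affinization `ĥ` spanned by the
nonzero modes `a_m` (`m ≠ 0`) and `K` (acting as the identity).  If `M` is an
`h̃`-module (mode action `ρ`) which is bounded below, and whose space of ground states
`M_gs = {v | a_m v = 0 for all m > 0}` is zero, then `M = 0`. -/
theorem bounded_below_no_ground_states_implies_zero
    {V M : Type} [AddCommGroup V] [Module ℂ V] [AddCommGroup M] [Module ℂ M]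
    (ρ : V → ℤ → Module.End ℂ M)
    (hbdd : ∀ x : M, ∃ N : ℤ, ∀ l : List (V × ℤ), l ≠ [] →
      N < (l.map Prod.snd).sum →
      l.foldr (fun pr y => ρ pr.1 pr.2 y) x = 0)
    (hgs : ∀ v : M, (∀ (a : V) (m : ℤ), 0 < m → ρ a m v = 0) → v = 0) :
    ∀ x : M, x = 0 :=
  bounded_below_no_ground_states_implies_zero_general ρ hbdd hgs
end

section
/- Every h̃-module M that is bounded below is isomorphic, via the canonical map extending the inclusion of ground states, to the induced module J(M_gs); i.e., the embedding M_gs ↪ M lifts to a unique isomorphism J(M_gs) ≅ M of h̃-modules. -/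
/-!
The number operator `D = ∑_{m > 0} m⁻¹ ∑ᵢ βᵢ(-m) αᵢ(m)` of the dual bases `α`, `β` satisfies
`[D, βⱼ(n)] = βⱼ(n)` for `n < 0` and `[D, αⱼ(n)] = -αⱼ(n)` for `n > 0`, and kills ground states.
The induced module `J` is spanned by the monomials `βᵢ₁(k₁) ⋯ βᵢₙ(kₙ) ιJ(w)`, each an eigenvector
of `D` with eigenvalue `n`; hence `D` is diagonalizable on `J` with spectrum in `ℕ` and kernel
`ιJ(W)`. On `M`, induction on the level (bounded below) gives the same diagonalizability; as the
`α`-modes lower eigenvalues and `-1` is not one, `ker D = M_gs`, and each eigenspace lies in the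
submodule generated by `M_gs`, so `F` is onto. As `F` commutes with `D` and the eigenspaces of `D`
on `M` are independent, it suffices to see that `F` is injective on each eigenspace of `J`: a
vector of eigenvalue `n + 1` in `ker F` is killed by the `α`-modes by induction, so it is a ground
state, hence `0`.
-/

namespace Stmt9

variable {V : Type} [AddCommGroup V] [Module ℂ V]

/-- The defining relations of an `h̃`-module with `K = id`:
`[a_m, b_n] = m (a,b) δ_{m+n,0}` as super-commutators, for nonzero modes. -/
def IsRep (g : ZMod 2 → Submodule ℂ V) (B : V →ₗ[ℂ] V →ₗ[ℂ] ℂ)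
    {P : Type} [AddCommGroup P] [Module ℂ P]
    (ρ : V →ₗ[ℂ] ℤ → Module.End ℂ P) : Prop :=
  ∀ (pa pb : ZMod 2) (a b : V), a ∈ g pa → b ∈ g pb → ∀ m n : ℤ, m ≠ 0 → n ≠ 0 →
    ρ a m * ρ b n - ((-1 : ℂ) ^ (pa.val * pb.val)) • (ρ b n * ρ a m) =
      ((Int.cast m : ℂ) * B a b * (if m + n = 0 then 1 else 0)) • (1 : Module.End ℂ P)

/-- A morphism of `h̃`-modules. -/
def Intertwines {P Q : Type} [AddCommGroup P] [Module ℂ P] [AddCommGroup Q] [Module ℂ Q]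
    (ρP : V →ₗ[ℂ] ℤ → Module.End ℂ P) (ρQ : V →ₗ[ℂ] ℤ → Module.End ℂ Q)
    (F : P →ₗ[ℂ] Q) : Prop :=
  ∀ (a : V) (m : ℤ), m ≠ 0 → F ∘ₗ (ρP a m : P →ₗ[ℂ] P) = (ρQ a m : Q →ₗ[ℂ] Q) ∘ₗ F

/-- The subspace of ground states: vectors annihilated by all positive modes. -/
def gs {P : Type} [AddCommGroup P] [Module ℂ P]
    (ρ : V →ₗ[ℂ] ℤ → Module.End ℂ P) : Submodule ℂ P where
  carrier := {x | ∀ (a : V) (m : ℤ), 0 < m → ρ a m x = 0}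
  add_mem' := by
    intro x y hx hy a m hm
    rw [map_add, hx a m hm, hy a m hm, add_zero]
  zero_mem' := by intro a m hm; simp
  smul_mem' := by
    intro c x hx a m hm
    rw [map_smul, hx a m hm, smul_zero]

/-- Bounded below: every vector is annihilated by every sufficiently positive
monomial of modes. -/
def BoundedBelow {P : Type} [AddCommGroup P] [Module ℂ P]
    (ρ : V →ₗ[ℂ] ℤ → Module.End ℂ P) : Prop :=
  ∀ x : P, ∃ N : ℤ, ∀ l : List (V × ℤ), l ≠ [] → N < (l.map Prod.snd).sum →
    l.foldr (fun pr y => ρ pr.1 pr.2 y) x = 0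

/-- `(J, ρJ, ιJ)` is the `h̃`-module induced from the super-vector space `W`
(positive modes act as zero on `W`, `K` as the identity), phrased via the universal
property of induced modules. -/
def IsInducedFrom (g : ZMod 2 → Submodule ℂ V) (B : V →ₗ[ℂ] V →ₗ[ℂ] ℂ)
    {W J : Type} [AddCommGroup W] [Module ℂ W] [AddCommGroup J] [Module ℂ J]
    (ρJ : V →ₗ[ℂ] ℤ → Module.End ℂ J) (ιJ : W →ₗ[ℂ] J) : Prop :=
  IsRep g B ρJ ∧ (∀ w : W, ιJ w ∈ gs ρJ) ∧
  ∀ (P : Type) [AddCommGroup P] [Module ℂ P] (ρP : V →ₗ[ℂ] ℤ → Module.End ℂ P),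
    IsRep g B ρP → ∀ f : W →ₗ[ℂ] P, (∀ w : W, f w ∈ gs ρP) →
      ∃! F : J →ₗ[ℂ] P, Intertwines ρJ ρP F ∧ F ∘ₗ ιJ = f

open Module.End

section Commutation

variable {A : Type} [Ring A] [Algebra ℂ A] {x y z : A} {ε c : ℂ}

theorem mul_mul_eq_of_superCommute_right (hε : ε * ε = 1) (hxz : x * z = ε • (z * x))
    (hyz : y * z = ε • (z * y) + c • 1) : x * y * z = z * (x * y) + c • x := by
  rw [mul_assoc, hyz, mul_add, mul_smul_comm, mul_smul_comm, mul_one, ← mul_assoc, hxz,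
    smul_mul_assoc, smul_smul, hε, one_smul, mul_assoc]

theorem mul_mul_eq_of_superCommute_left (hε : ε * ε = 1) (hxz : x * z = ε • (z * x) + c • 1)
    (hyz : y * z = ε • (z * y)) : x * y * z = z * (x * y) + (ε * c) • y := by
  rw [mul_assoc, hyz, mul_smul_comm, ← mul_assoc, hxz, add_mul, smul_mul_assoc, smul_mul_assoc,
    one_mul, smul_add, smul_smul, hε, one_smul, smul_smul, mul_assoc]

end Commutation

theorem neg_one_pow_mul_self {R : Type*} [Monoid R] [HasDistribNeg R] (k : ℕ) :
    (-1 : R) ^ k * (-1) ^ k = 1 := by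
  rw [← pow_add, ← two_mul, pow_mul, neg_one_sq, one_pow]

theorem injective_of_iSup_eq_top_of_iSupIndep {κ R N N' : Type*} [Ring R] [AddCommGroup N]
    [Module R N] [AddCommGroup N'] [Module R N'] {p : κ → Submodule R N} {q : κ → Submodule R N'}
    (F : N →ₗ[R] N') (hp : ⨆ i, p i = ⊤) (hq : iSupIndep q) (hpq : ∀ i, p i ≤ (q i).comap F)
    (hinj : ∀ i, ∀ x ∈ p i, F x = 0 → x = 0) : Function.Injective F := by
  rw [← LinearMap.ker_eq_bot, Submodule.eq_bot_iff]
  intro x hx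
  obtain ⟨f, hf, rfl⟩ := (Submodule.mem_iSup_iff_exists_finsupp p x).mp (hp ▸ Submodule.mem_top)
  have hFf := (iSupIndep_iff_finsetSum_eq_zero_imp_eq_zero q).mp hq f.support (fun i => F (f i))
    (fun i _ => hpq i (hf i)) (by rw [← map_sum]; exact hx)
  exact Finset.sum_eq_zero fun i hi => hinj i _ (hf i) (hFf i hi)

section Eigenspaces

variable {K N : Type*} [Field K] [AddCommGroup N] [Module K N] {T : Module.End K N}

theorem eigenspace_eq_bot_of_iSup_eigenspace_natCast_eq_top
    (h : ⨆ n : ℕ, T.eigenspace (n : K) = ⊤) {μ : K} (hμ : ∀ n : ℕ, (n : K) ≠ μ) :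
    T.eigenspace μ = ⊥ := by
  have hdisj := T.eigenspaces_iSupIndep.disjoint_biSup (x := μ)
    (y := Set.range ((↑) : ℕ → K)) (by rintro ⟨n, hn⟩; exact hμ n hn)
  rwa [iSup_range, h, disjoint_top] at hdisj

theorem mem_iSup_eigenspace_natCast_of_apply_mem [CharZero K] {x : N}
    (h : T x ∈ ⨆ n : ℕ, T.eigenspace ((n : K) + 1)) : x ∈ ⨆ n : ℕ, T.eigenspace (n : K) := by
  have hsurj : ⨆ n : ℕ, T.eigenspace ((n : K) + 1) ≤
      (⨆ n : ℕ, T.eigenspace ((n : K) + 1)).map T := by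
    rw [Submodule.map_iSup]
    refine iSup_mono fun n v hv => ⟨((n : K) + 1)⁻¹ • v, Submodule.smul_mem _ _ hv, ?_⟩
    rw [map_smul, mem_eigenspace_iff.mp hv, smul_smul, inv_mul_cancel₀ (Nat.cast_add_one_ne_zero n),
      one_smul]
  obtain ⟨z, hz, hTz⟩ := hsurj h
  rw [← sub_add_cancel x z]
  refine add_mem (Submodule.mem_iSup_of_mem 0 ?_) ?_
  · rw [Nat.cast_zero, mem_eigenspace_iff, map_sub, hTz, sub_self, zero_smul]
  · exact (iSup_mono' fun n => ⟨n + 1, by rw [Nat.cast_succ]⟩ :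
      ⨆ n : ℕ, T.eigenspace ((n : K) + 1) ≤ _) hz

theorem disjoint_eigenspace_zero_iSup_eigenspace_natCast_add_one [CharZero K] :
    Disjoint (T.eigenspace 0) (⨆ n : ℕ, T.eigenspace ((n : K) + 1)) := by
  simpa only [iSup_range] using T.eigenspaces_iSupIndep.disjoint_biSup (x := 0)
    (y := Set.range fun n : ℕ => (n : K) + 1)
    (by rintro ⟨n, hn⟩; exact Nat.cast_add_one_ne_zero n hn)

end Eigenspaces

variable {P : Type} [AddCommGroup P] [Module ℂ P]

theorem IsRep.mul_eq {g : ZMod 2 → Submodule ℂ V} {B : V →ₗ[ℂ] V →ₗ[ℂ] ℂ}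
    {ρ : V →ₗ[ℂ] ℤ → Module.End ℂ P} (h : IsRep g B ρ) {pa pb : ZMod 2} {a b : V}
    (ha : a ∈ g pa) (hb : b ∈ g pb) {m n : ℤ} (hm : m ≠ 0) (hn : n ≠ 0) :
    ρ a m * ρ b n = ((-1 : ℂ) ^ (pa.val * pb.val)) • (ρ b n * ρ a m) +
      ((m : ℂ) * B a b * if m + n = 0 then 1 else 0) • 1 :=
  sub_eq_iff_eq_add'.mp (h pa pb a b ha hb m n hm hn)

theorem IsRep.mul_eq_of_add_ne_zero {g : ZMod 2 → Submodule ℂ V} {B : V →ₗ[ℂ] V →ₗ[ℂ] ℂ}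
    {ρ : V →ₗ[ℂ] ℤ → Module.End ℂ P} (h : IsRep g B ρ) {pa pb : ZMod 2} {a b : V}
    (ha : a ∈ g pa) (hb : b ∈ g pb) {m n : ℤ} (hm : m ≠ 0) (hn : n ≠ 0) (hmn : m + n ≠ 0) :
    ρ a m * ρ b n = ((-1 : ℂ) ^ (pa.val * pb.val)) • (ρ b n * ρ a m) := by
  simpa [hmn] using h.mul_eq ha hb hm hn

theorem Intertwines.apply {Q : Type} [AddCommGroup Q] [Module ℂ Q]
    {ρP : V →ₗ[ℂ] ℤ → Module.End ℂ P} {ρQ : V →ₗ[ℂ] ℤ → Module.End ℂ Q} {F : P →ₗ[ℂ] Q}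
    (hF : Intertwines ρP ρQ F) (a : V) {m : ℤ} (hm : m ≠ 0) (v : P) :
    F (ρP a m v) = ρQ a m (F v) :=
  LinearMap.congr_fun (hF a m hm) v

theorem Intertwines.range_le_comap {Q : Type} [AddCommGroup Q] [Module ℂ Q]
    {ρP : V →ₗ[ℂ] ℤ → Module.End ℂ P} {ρQ : V →ₗ[ℂ] ℤ → Module.End ℂ Q} {F : P →ₗ[ℂ] Q}
    (hF : Intertwines ρP ρQ F) (a : V) {m : ℤ} (hm : m ≠ 0) :
    LinearMap.range F ≤ (LinearMap.range F).comap (ρQ a m) := by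
  rintro _ ⟨u, rfl⟩
  exact ⟨ρP a m u, hF.apply a hm u⟩

theorem apply_eq_sum_basis_repr {ι : Type} [Fintype ι] (ρ : V →ₗ[ℂ] ℤ → Module.End ℂ P)
    (b : Module.Basis ι ℂ V) (a : V) (m : ℤ) (v : P) :
    ρ a m v = ∑ i, b.repr a i • ρ (b i) m v := by
  conv_lhs => rw [← b.sum_repr a]
  simp only [map_sum, map_smul, Finset.sum_apply, LinearMap.sum_apply, Pi.smul_apply,
    LinearMap.smul_apply]

section NumberOperator

variable {ι : Type} [Fintype ι]

def killedAbove (ρ : V →ₗ[ℂ] ℤ → Module.End ℂ P) (d : ℤ) : Submodule ℂ P where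
  carrier := {v | ∀ (a : V) (m : ℤ), d < m → ρ a m v = 0}
  add_mem' hv hw a m hm := by rw [map_add, hv a m hm, hw a m hm, add_zero]
  zero_mem' a m _ := map_zero _
  smul_mem' c v hv a m hm := by rw [map_smul, hv a m hm, smul_zero]

theorem killedAbove_mono {ρ : V →ₗ[ℂ] ℤ → Module.End ℂ P} {d d' : ℤ} (h : d ≤ d') :
    killedAbove ρ d ≤ killedAbove ρ d' :=
  fun _ hv a m hm => hv a m (h.trans_lt hm)

def IsSmooth (ρ : V →ₗ[ℂ] ℤ → Module.End ℂ P) : Prop := ∀ v : P, ∃ d, v ∈ killedAbove ρ d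

noncomputable def truncNumberOp (ρ : V →ₗ[ℂ] ℤ → Module.End ℂ P) (α β : Module.Basis ι ℂ V)
    (d : ℤ) : Module.End ℂ P :=
  ∑ m ∈ Finset.Icc 1 d, ∑ i, (m : ℂ)⁻¹ • (ρ (β i) (-m) * ρ (α i) m)

variable {ρ : V →ₗ[ℂ] ℤ → Module.End ℂ P} {α β : Module.Basis ι ℂ V}

theorem truncNumberOp_apply_of_le {d d' : ℤ} {v : P} (hv : v ∈ killedAbove ρ d) (h : d ≤ d') :
    truncNumberOp ρ α β d' v = truncNumberOp ρ α β d v := by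
  simp only [truncNumberOp, LinearMap.sum_apply]
  refine (Finset.sum_subset (Finset.Icc_subset_Icc_right h) fun m hm hm' => ?_).symm
  have hdm : d < m := by simp only [Finset.mem_Icc] at hm hm'; omega
  exact Finset.sum_eq_zero fun i _ => by simp [hv (α i) m hdm]

theorem truncNumberOp_apply_eq {d d' : ℤ} {v : P} (hv : v ∈ killedAbove ρ d)
    (hv' : v ∈ killedAbove ρ d') : truncNumberOp ρ α β d v = truncNumberOp ρ α β d' v := by
  rw [← truncNumberOp_apply_of_le hv (le_max_left d d'),
    truncNumberOp_apply_of_le hv' (le_max_right d d')]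

/-- `∑_{m > 0} m⁻¹ ∑ᵢ βᵢ(-m) αᵢ(m)`, evaluated on `v` by truncating beyond a level above which
all modes kill `v`. -/
noncomputable def numberOp (ρ : V →ₗ[ℂ] ℤ → Module.End ℂ P) (α β : Module.Basis ι ℂ V)
    (hS : IsSmooth ρ) : Module.End ℂ P where
  toFun v := truncNumberOp ρ α β (hS v).choose v
  map_add' v w := by
    obtain ⟨d, hv⟩ := hS v
    obtain ⟨d', hw⟩ := hS w
    have hv' := killedAbove_mono (le_max_left d d') hv
    have hw' := killedAbove_mono (le_max_right d d') hw
    rw [truncNumberOp_apply_eq (hS (v + w)).choose_spec (add_mem hv' hw'), map_add,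
      truncNumberOp_apply_eq hv' (hS v).choose_spec,
      truncNumberOp_apply_eq hw' (hS w).choose_spec]
  map_smul' c v := by
    rw [truncNumberOp_apply_eq (hS (c • v)).choose_spec
      (Submodule.smul_mem _ c (hS v).choose_spec), map_smul, RingHom.id_apply]

theorem numberOp_apply_of_mem {hS : IsSmooth ρ} {d : ℤ} {v : P} (hv : v ∈ killedAbove ρ d) :
    numberOp ρ α β hS v = truncNumberOp ρ α β d v := by
  change truncNumberOp ρ α β (hS v).choose v = _
  exact truncNumberOp_apply_eq (hS v).choose_spec hv

theorem numberOp_apply_of_mem_gs {hS : IsSmooth ρ} {v : P} (hv : v ∈ gs ρ) :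
    numberOp ρ α β hS v = 0 := by
  rw [numberOp_apply_of_mem (d := 0) hv]
  simp [truncNumberOp]

theorem gs_le_eigenspace_zero (hS : IsSmooth ρ) :
    gs ρ ≤ (numberOp ρ α β hS).eigenspace 0 := fun v hv => by
  rw [mem_eigenspace_iff, zero_smul, numberOp_apply_of_mem_gs hv]

theorem Intertwines.truncNumberOp_apply {Q : Type} [AddCommGroup Q] [Module ℂ Q]
    {ρQ : V →ₗ[ℂ] ℤ → Module.End ℂ Q} {F : P →ₗ[ℂ] Q} (hF : Intertwines ρ ρQ F) (d : ℤ)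
    (v : P) : F (truncNumberOp ρ α β d v) = truncNumberOp ρQ α β d (F v) := by
  simp only [truncNumberOp, LinearMap.sum_apply, LinearMap.smul_apply, Module.End.mul_apply,
    map_sum, map_smul]
  refine Finset.sum_congr rfl fun m hm => Finset.sum_congr rfl fun i _ => ?_
  have hm : 0 < m := (Finset.mem_Icc.mp hm).1
  rw [hF.apply _ (by omega), hF.apply _ hm.ne']

theorem Intertwines.apply_numberOp {Q : Type} [AddCommGroup Q] [Module ℂ Q]
    {ρQ : V →ₗ[ℂ] ℤ → Module.End ℂ Q} {F : P →ₗ[ℂ] Q} (hF : Intertwines ρ ρQ F)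
    (hS : IsSmooth ρ) (hSQ : IsSmooth ρQ) (v : P) :
    F (numberOp ρ α β hS v) = numberOp ρQ α β hSQ (F v) := by
  obtain ⟨d, hv⟩ := hS v
  have hv' := killedAbove_mono (le_max_left d 0) hv
  have hFv : F v ∈ killedAbove ρQ (max d 0) := fun a m hm => by
    rw [← hF.apply a (by omega), hv' a m hm, map_zero]
  rw [numberOp_apply_of_mem hv', numberOp_apply_of_mem hFv, hF.truncNumberOp_apply]

theorem Intertwines.eigenspace_numberOp_le_comap {Q : Type} [AddCommGroup Q] [Module ℂ Q]
    {ρQ : V →ₗ[ℂ] ℤ → Module.End ℂ Q} {F : P →ₗ[ℂ] Q} (hF : Intertwines ρ ρQ F)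
    (hS : IsSmooth ρ) (hSQ : IsSmooth ρQ) (μ : ℂ) :
    (numberOp ρ α β hS).eigenspace μ ≤ ((numberOp ρQ α β hSQ).eigenspace μ).comap F :=
  fun v hv => by
    rw [Submodule.mem_comap, mem_eigenspace_iff, ← hF.apply_numberOp hS hSQ,
      mem_eigenspace_iff.mp hv, map_smul]

theorem truncNumberOp_apply_mem {U U' : Submodule ℂ P} {d : ℤ} {v : P}
    (hα : ∀ i, ∀ m ∈ Finset.Icc 1 d, ρ (α i) m v ∈ U')
    (hβ : ∀ i, ∀ m ∈ Finset.Icc 1 d, ∀ w ∈ U', ρ (β i) (-m) w ∈ U) :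
    truncNumberOp ρ α β d v ∈ U := by
  simp only [truncNumberOp, LinearMap.sum_apply, LinearMap.smul_apply, Module.End.mul_apply]
  exact Submodule.sum_mem _ fun m hm => Submodule.sum_mem _ fun i _ =>
    Submodule.smul_mem _ _ (hβ i m hm _ (hα i m hm))

end NumberOperator

section Commutators

variable {ι : Type} [Fintype ι] [DecidableEq ι]
variable {g : ZMod 2 → Submodule ℂ V} {B : V →ₗ[ℂ] V →ₗ[ℂ] ℂ}
variable {ρ : V →ₗ[ℂ] ℤ → Module.End ℂ P} {α β : Module.Basis ι ℂ V} {p : ι → ZMod 2}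

theorem sum_Icc_sum_ite_eq {M : Type} [AddCommMonoid M] {d n : ℤ} (hn : 1 ≤ n ∧ n ≤ d)
    (j : ι) (f : ℤ → ι → M) :
    ∑ m ∈ Finset.Icc 1 d, ∑ i, (if i = j ∧ m = n then f m i else 0) = f n j := by
  simp_rw [ite_and, Finset.sum_ite_eq' Finset.univ j, Finset.mem_univ, if_true,
    Finset.sum_ite_eq' (Finset.Icc 1 d) n, Finset.mem_Icc, if_pos hn]

theorem truncNumberOp_mul_beta (hρ : IsRep g B ρ) (hα : ∀ i, α i ∈ g (p i))
    (hβ : ∀ i, β i ∈ g (p i)) (hdual : ∀ i j, B (α i) (β j) = if i = j then 1 else 0)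
    (j : ι) {n d : ℤ} (hn : n < 0) (hd : -n ≤ d) :
    truncNumberOp ρ α β d * ρ (β j) n =
      ρ (β j) n * truncNumberOp ρ α β d + ρ (β j) n := by
  have term : ∀ m ∈ Finset.Icc 1 d, ∀ i, (m : ℂ)⁻¹ • (ρ (β i) (-m) * ρ (α i) m) * ρ (β j) n =
      ρ (β j) n * ((m : ℂ)⁻¹ • (ρ (β i) (-m) * ρ (α i) m)) +
        if i = j ∧ m = -n then ρ (β i) (-m) else 0 := by
    intro m hm i
    have hm : 0 < m := (Finset.mem_Icc.mp hm).1
    rw [smul_mul_assoc, mul_mul_eq_of_superCommute_right (neg_one_pow_mul_self _)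
      (hρ.mul_eq_of_add_ne_zero (hβ i) (hβ j) (by omega) (by omega) (by omega))
      (hρ.mul_eq (hα i) (hβ j) hm.ne' (by omega)), smul_add, mul_smul_comm, smul_smul, hdual]
    have hmC : (m : ℂ) ≠ 0 := by exact_mod_cast hm.ne'
    congr 1
    by_cases hij : i = j
    · by_cases hmn : m = -n
      · obtain rfl : n = -m := by omega
        simp [hij, hmC]
      · simp [hij, hmn, show m + n ≠ 0 by omega]
    · simp [hij]
  simp only [truncNumberOp, Finset.sum_mul, Finset.mul_sum]
  rw [Finset.sum_congr rfl fun m hm => Finset.sum_congr rfl fun i _ => term m hm i]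
  simp only [Finset.sum_add_distrib]
  rw [sum_Icc_sum_ite_eq (by omega) j fun m i => ρ (β i) (-m), neg_neg]

theorem truncNumberOp_mul_alpha (hρ : IsRep g B ρ) (hα : ∀ i, α i ∈ g (p i))
    (hβ : ∀ i, β i ∈ g (p i)) (hdual : ∀ i j, B (α i) (β j) = if i = j then 1 else 0)
    (hsymm : ∀ (i j : ZMod 2) (x y : V), x ∈ g i → y ∈ g j →
      B x y = (-1 : ℂ) ^ (i.val * j.val) * B y x)
    (j : ι) {n d : ℤ} (hn : 0 < n) (hd : n ≤ d) :
    truncNumberOp ρ α β d * ρ (α j) n =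
      ρ (α j) n * truncNumberOp ρ α β d - ρ (α j) n := by
  have term : ∀ m ∈ Finset.Icc 1 d, ∀ i, (m : ℂ)⁻¹ • (ρ (β i) (-m) * ρ (α i) m) * ρ (α j) n =
      ρ (α j) n * ((m : ℂ)⁻¹ • (ρ (β i) (-m) * ρ (α i) m)) +
        if i = j ∧ m = n then -ρ (α i) m else 0 := by
    intro m hm i
    have hm : 0 < m := (Finset.mem_Icc.mp hm).1
    rw [smul_mul_assoc, mul_mul_eq_of_superCommute_left (neg_one_pow_mul_self _)
      (hρ.mul_eq (hβ i) (hα j) (by omega) hn.ne')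
      (hρ.mul_eq_of_add_ne_zero (hα i) (hα j) hm.ne' hn.ne' (by omega)),
      smul_add, mul_smul_comm, smul_smul, hsymm _ _ _ _ (hβ i) (hα j), hdual]
    have hmC : (m : ℂ) ≠ 0 := by exact_mod_cast hm.ne'
    congr 1
    by_cases hij : i = j
    · subst hij
      by_cases hmn : m = n
      · subst hmn
        simp only [and_self, if_true, neg_add_cancel, mul_one, Int.cast_neg]
        rw [← neg_one_smul ℂ (ρ (α i) m)]
        congr 1
        have hE := neg_one_pow_mul_self (R := ℂ) ((p i).val * (p i).val)
        generalize (-1 : ℂ) ^ ((p i).val * (p i).val) = E at hE ⊢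
        field_simp
        linear_combination -hE
      · simp [hmn, show -m + n ≠ 0 by omega]
    · simp [hij, Ne.symm hij]
  simp only [truncNumberOp, Finset.sum_mul, Finset.mul_sum]
  rw [Finset.sum_congr rfl fun m hm => Finset.sum_congr rfl fun i _ => term m hm i]
  simp only [Finset.sum_add_distrib]
  rw [sum_Icc_sum_ite_eq ⟨hn, hd⟩ j fun m i => -ρ (α i) m, sub_eq_add_neg]

theorem numberOp_apply_beta (hS : IsSmooth ρ) (hρ : IsRep g B ρ) (hα : ∀ i, α i ∈ g (p i))
    (hβ : ∀ i, β i ∈ g (p i)) (hdual : ∀ i j, B (α i) (β j) = if i = j then 1 else 0)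
    (j : ι) {n : ℤ} (hn : n < 0) (v : P) :
    numberOp ρ α β hS (ρ (β j) n v) = ρ (β j) n (numberOp ρ α β hS v) + ρ (β j) n v := by
  obtain ⟨d, hv⟩ := hS v
  obtain ⟨d', hv'⟩ := hS (ρ (β j) n v)
  let e := max (max d d') (-n)
  rw [numberOp_apply_of_mem (killedAbove_mono (by omega : d' ≤ e) hv'),
    numberOp_apply_of_mem (killedAbove_mono (by omega : d ≤ e) hv), ← Module.End.mul_apply,
    truncNumberOp_mul_beta hρ hα hβ hdual j hn (by omega), LinearMap.add_apply,
    Module.End.mul_apply]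

theorem numberOp_apply_alpha (hS : IsSmooth ρ) (hρ : IsRep g B ρ) (hα : ∀ i, α i ∈ g (p i))
    (hβ : ∀ i, β i ∈ g (p i)) (hdual : ∀ i j, B (α i) (β j) = if i = j then 1 else 0)
    (hsymm : ∀ (i j : ZMod 2) (x y : V), x ∈ g i → y ∈ g j →
      B x y = (-1 : ℂ) ^ (i.val * j.val) * B y x)
    (j : ι) {n : ℤ} (hn : 0 < n) (v : P) :
    numberOp ρ α β hS (ρ (α j) n v) = ρ (α j) n (numberOp ρ α β hS v) - ρ (α j) n v := by
  obtain ⟨d, hv⟩ := hS v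
  obtain ⟨d', hv'⟩ := hS (ρ (α j) n v)
  let e := max (max d d') n
  rw [numberOp_apply_of_mem (killedAbove_mono (by omega : d' ≤ e) hv'),
    numberOp_apply_of_mem (killedAbove_mono (by omega : d ≤ e) hv), ← Module.End.mul_apply,
    truncNumberOp_mul_alpha hρ hα hβ hdual hsymm j hn (by omega), LinearMap.sub_apply,
    Module.End.mul_apply]

theorem beta_mem_eigenspace_numberOp (hS : IsSmooth ρ) (hρ : IsRep g B ρ)
    (hα : ∀ i, α i ∈ g (p i)) (hβ : ∀ i, β i ∈ g (p i))
    (hdual : ∀ i j, B (α i) (β j) = if i = j then 1 else 0)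
    (j : ι) {n : ℤ} (hn : n < 0) {μ : ℂ} {v : P} (hv : v ∈ (numberOp ρ α β hS).eigenspace μ) :
    ρ (β j) n v ∈ (numberOp ρ α β hS).eigenspace (μ + 1) := by
  rw [mem_eigenspace_iff] at hv ⊢
  rw [numberOp_apply_beta hS hρ hα hβ hdual j hn, hv, map_smul, add_smul, one_smul]

theorem alpha_mem_eigenspace_numberOp (hS : IsSmooth ρ) (hρ : IsRep g B ρ)
    (hα : ∀ i, α i ∈ g (p i)) (hβ : ∀ i, β i ∈ g (p i))
    (hdual : ∀ i j, B (α i) (β j) = if i = j then 1 else 0)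
    (hsymm : ∀ (i j : ZMod 2) (x y : V), x ∈ g i → y ∈ g j →
      B x y = (-1 : ℂ) ^ (i.val * j.val) * B y x)
    (j : ι) {n : ℤ} (hn : 0 < n) {μ : ℂ} {v : P} (hv : v ∈ (numberOp ρ α β hS).eigenspace μ) :
    ρ (α j) n v ∈ (numberOp ρ α β hS).eigenspace (μ - 1) := by
  rw [mem_eigenspace_iff] at hv ⊢
  rw [numberOp_apply_alpha hS hρ hα hβ hdual hsymm j hn, hv, map_smul, sub_smul, one_smul]

theorem eigenspace_numberOp_zero_le_gs (hS : IsSmooth ρ) (hρ : IsRep g B ρ)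
    (hα : ∀ i, α i ∈ g (p i)) (hβ : ∀ i, β i ∈ g (p i))
    (hdual : ∀ i j, B (α i) (β j) = if i = j then 1 else 0)
    (hsymm : ∀ (i j : ZMod 2) (x y : V), x ∈ g i → y ∈ g j →
      B x y = (-1 : ℂ) ^ (i.val * j.val) * B y x)
    (hspec : ⨆ n : ℕ, (numberOp ρ α β hS).eigenspace (n : ℂ) = ⊤) :
    (numberOp ρ α β hS).eigenspace 0 ≤ gs ρ := by
  have hbot := eigenspace_eq_bot_of_iSup_eigenspace_natCast_eq_top hspec (μ := 0 - 1)
    fun n h => Nat.cast_add_one_ne_zero n (by rw [h]; ring)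
  intro v hv a m hm
  rw [apply_eq_sum_basis_repr ρ α]
  refine Finset.sum_eq_zero fun j _ => ?_
  have := alpha_mem_eigenspace_numberOp hS hρ hα hβ hdual hsymm j hm hv
  rw [hbot, Submodule.mem_bot] at this
  rw [this, smul_zero]

end Commutators

section BoundedBelow

variable {ι : Type} [Fintype ι] [DecidableEq ι]
variable {g : ZMod 2 → Submodule ℂ V} {B : V →ₗ[ℂ] V →ₗ[ℂ] ℂ}
variable {ρ : V →ₗ[ℂ] ℤ → Module.End ℂ P} {α β : Module.Basis ι ℂ V} {p : ι → ZMod 2}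

theorem BoundedBelow.isSmooth (hbdd : BoundedBelow ρ) : IsSmooth ρ := fun v => by
  obtain ⟨N, hN⟩ := hbdd v
  exact ⟨N, fun a m hm => by simpa using hN [(a, m)] (List.cons_ne_nil _ _) (by simpa using hm)⟩

/-- Induction on the level of a vector: positive modes lower it, and vectors of level `≤ 0` are
killed by all of them. -/
theorem BoundedBelow.mem_of_forall_modes_mem (hbdd : BoundedBelow ρ) {U : Submodule ℂ P}
    (hU : ∀ x, (∀ (a : V) (m : ℤ), 0 < m → ρ a m x ∈ U) → x ∈ U) (x : P) : x ∈ U := by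
  obtain ⟨N, hN⟩ := hbdd x
  induction hn : N.toNat using Nat.strong_induction_on generalizing N x with
  | _ n ih =>
  refine hU x fun a m hm => ?_
  by_cases hmN : N < m
  · have h := hN [(a, m)] (List.cons_ne_nil _ _) (by simpa using hmN)
    simp only [List.foldr_cons, List.foldr_nil] at h
    exact h ▸ U.zero_mem
  · refine ih (N - m).toNat (by omega) (ρ a m x) (N - m) (fun l hl hsum => ?_) rfl
    simpa using hN (l ++ [(a, m)]) (by simp) (by simp; omega)

theorem BoundedBelow.iSup_eigenspace_numberOp_eq_top (hbdd : BoundedBelow ρ)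
    (hρ : IsRep g B ρ) (hα : ∀ i, α i ∈ g (p i)) (hβ : ∀ i, β i ∈ g (p i))
    (hdual : ∀ i j, B (α i) (β j) = if i = j then 1 else 0) :
    ⨆ n : ℕ, (numberOp ρ α β hbdd.isSmooth).eigenspace (n : ℂ) = ⊤ := by
  set D := numberOp ρ α β hbdd.isSmooth
  refine Submodule.eq_top_iff'.mpr (hbdd.mem_of_forall_modes_mem fun x hx => ?_)
  refine mem_iSup_eigenspace_natCast_of_apply_mem ?_
  obtain ⟨d, hd⟩ := hbdd.isSmooth x
  rw [numberOp_apply_of_mem hd]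
  refine truncNumberOp_apply_mem (fun i m hm => hx _ m (Finset.mem_Icc.mp hm).1)
    fun i m hm w hw => ?_
  have hm : -m < 0 := by linarith [(Finset.mem_Icc.mp hm).1]
  have hle : ⨆ n : ℕ, D.eigenspace (n : ℂ) ≤
      (⨆ n : ℕ, D.eigenspace ((n : ℂ) + 1)).comap (ρ (β i) (-m)) := iSup_le fun n _ hw =>
    Submodule.mem_iSup_of_mem n (beta_mem_eigenspace_numberOp _ hρ hα hβ hdual i hm hw)
  exact hle hw

theorem eq_top_of_gs_le_of_iSup_eigenspace_numberOp_eq_top (hS : IsSmooth ρ) (hρ : IsRep g B ρ)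
    (hα : ∀ i, α i ∈ g (p i)) (hβ : ∀ i, β i ∈ g (p i))
    (hdual : ∀ i j, B (α i) (β j) = if i = j then 1 else 0)
    (hsymm : ∀ (i j : ZMod 2) (x y : V), x ∈ g i → y ∈ g j →
      B x y = (-1 : ℂ) ^ (i.val * j.val) * B y x)
    (hspec : ⨆ n : ℕ, (numberOp ρ α β hS).eigenspace (n : ℂ) = ⊤) {U : Submodule ℂ P}
    (hU : ∀ (a : V) (m : ℤ), m ≠ 0 → U ≤ U.comap (ρ a m)) (hgs : gs ρ ≤ U) : U = ⊤ := by
  set D := numberOp ρ α β hS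
  suffices h : ∀ n : ℕ, D.eigenspace (n : ℂ) ≤ U by
    rw [eq_top_iff, ← hspec]
    exact iSup_le h
  intro n
  induction n with
  | zero =>
    rw [Nat.cast_zero]
    exact (eigenspace_numberOp_zero_le_gs hS hρ hα hβ hdual hsymm hspec).trans hgs
  | succ n ih =>
    intro v hv
    obtain ⟨d, hd⟩ := hS v
    have hDv : D v ∈ U := by
      rw [numberOp_apply_of_mem hd]
      refine truncNumberOp_apply_mem (U' := U) (fun i m hm => ih ?_)
        fun i m hm w hw => hU _ _ (by linarith [(Finset.mem_Icc.mp hm).1]) hw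
      have := alpha_mem_eigenspace_numberOp hS hρ hα hβ hdual hsymm i
        (Finset.mem_Icc.mp hm).1 hv
      rwa [Nat.cast_succ, add_sub_cancel_right] at this
    rw [mem_eigenspace_iff.mp hv] at hDv
    simpa [(Nat.cast_add_one_ne_zero n)] using U.smul_mem ((n : ℂ) + 1)⁻¹ hDv

end BoundedBelow

section Induced

variable {g : ZMod 2 → Submodule ℂ V} {B : V →ₗ[ℂ] V →ₗ[ℂ] ℂ}

/-- The zero modes, on which `IsRep` imposes nothing, act by `0`. -/
noncomputable def quotientRep (ρ : V →ₗ[ℂ] ℤ → Module.End ℂ P) (U : Submodule ℂ P)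
    (hU : ∀ (a : V) (m : ℤ), m ≠ 0 → U ≤ U.comap (ρ a m)) :
    V →ₗ[ℂ] ℤ → Module.End ℂ (P ⧸ U) :=
  LinearMap.pi fun m => if hm : m = 0 then 0 else
    U.mapQLinear U ∘ₗ (LinearMap.proj m ∘ₗ ρ).codRestrict (U.compatibleMaps U) fun a => hU a m hm

variable {ρ : V →ₗ[ℂ] ℤ → Module.End ℂ P} {U : Submodule ℂ P}
  {hU : ∀ (a : V) (m : ℤ), m ≠ 0 → U ≤ U.comap (ρ a m)}

theorem quotientRep_mkQ (a : V) {m : ℤ} (hm : m ≠ 0) (v : P) :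
    quotientRep ρ U hU a m (U.mkQ v) = U.mkQ (ρ a m v) := by
  simp only [quotientRep, LinearMap.pi_apply, dif_neg hm, LinearMap.comp_apply]
  rfl

theorem IsRep.quotient (hρ : IsRep g B ρ) : IsRep g B (quotientRep ρ U hU) := by
  intro pa pb a b ha hb m n hm hn
  refine U.linearMap_qext (LinearMap.ext fun v => ?_)
  have h := LinearMap.congr_fun (hρ pa pb a b ha hb m n hm hn) v
  simp only [LinearMap.sub_apply, LinearMap.smul_apply, Module.End.mul_apply,
    Module.End.one_apply] at h
  simp only [LinearMap.comp_apply, LinearMap.sub_apply, LinearMap.smul_apply,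
    Module.End.mul_apply, Module.End.one_apply, quotientRep_mkQ _ hm, quotientRep_mkQ _ hn]
  rw [← map_smul, ← map_sub, h, map_smul]

theorem mkQ_intertwines_quotientRep : Intertwines ρ (quotientRep ρ U hU) U.mkQ :=
  fun a _ hm => LinearMap.ext fun v => (quotientRep_mkQ a hm v).symm

/-- Both the quotient map `J → J ⧸ U` and `0` extend `0 : W → J ⧸ U`. -/
theorem IsInducedFrom.eq_top {W J : Type} [AddCommGroup W] [Module ℂ W] [AddCommGroup J]
    [Module ℂ J] {ρJ : V →ₗ[ℂ] ℤ → Module.End ℂ J} {ιJ : W →ₗ[ℂ] J}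
    (hJ : IsInducedFrom g B ρJ ιJ) {U : Submodule ℂ J}
    (hU : ∀ (a : V) (m : ℤ), m ≠ 0 → U ≤ U.comap (ρJ a m)) (hι : LinearMap.range ιJ ≤ U) :
    U = ⊤ := by
  obtain ⟨hρ, -, huniv⟩ := hJ
  obtain ⟨_, -, huniq⟩ := huniv _ (quotientRep ρJ U hU) hρ.quotient 0 fun _ => zero_mem _
  have hmkQ : U.mkQ = 0 := (huniq _ ⟨mkQ_intertwines_quotientRep, by
      ext w; simpa using hι (LinearMap.mem_range_self ιJ w)⟩).trans
    (huniq 0 ⟨fun _ _ _ => by simp, LinearMap.zero_comp _⟩).symm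
  rw [← U.ker_mkQ, hmkQ, LinearMap.ker_zero]

end Induced

section CreationMonomials

variable {ι : Type}
variable {g : ZMod 2 → Submodule ℂ V} {B : V →ₗ[ℂ] V →ₗ[ℂ] ℂ}
variable {W : Type} [AddCommGroup W] [Module ℂ W]

inductive IsCreationMonomial (ρ : V →ₗ[ℂ] ℤ → Module.End ℂ P) (β : ι → V) (ι₀ : W →ₗ[ℂ] P) :
    ℕ → P → Prop
  | of (w : W) : IsCreationMonomial ρ β ι₀ 0 (ι₀ w)
  | cons {n : ℕ} {v : P} (i : ι) {k : ℤ} (hk : k < 0) :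
      IsCreationMonomial ρ β ι₀ n v → IsCreationMonomial ρ β ι₀ (n + 1) (ρ (β i) k v)

def creationSpan (ρ : V →ₗ[ℂ] ℤ → Module.End ℂ P) (β : ι → V) (ι₀ : W →ₗ[ℂ] P) :
    Submodule ℂ P :=
  Submodule.span ℂ {v | ∃ n, IsCreationMonomial ρ β ι₀ n v}

variable {ρ : V →ₗ[ℂ] ℤ → Module.End ℂ P} {β : Module.Basis ι ℂ V} {ι₀ : W →ₗ[ℂ] P}
  {p : ι → ZMod 2}

theorem IsCreationMonomial.mem_creationSpan {n : ℕ} {v : P}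
    (hv : IsCreationMonomial ρ β ι₀ n v) : v ∈ creationSpan ρ β ι₀ :=
  Submodule.subset_span ⟨n, hv⟩

theorem range_le_creationSpan : LinearMap.range ι₀ ≤ creationSpan ρ β ι₀ := by
  rintro _ ⟨w, rfl⟩
  exact (IsCreationMonomial.of w).mem_creationSpan

theorem creationSpan_le_comap_of_neg [Fintype ι] (a : V) {k : ℤ} (hk : k < 0) :
    creationSpan ρ β ι₀ ≤ (creationSpan ρ β ι₀).comap (ρ a k) := by
  refine Submodule.span_le.mpr fun v ⟨n, hv⟩ => ?_
  rw [SetLike.mem_coe, Submodule.mem_comap, apply_eq_sum_basis_repr ρ β]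
  exact Submodule.sum_mem _ fun i _ =>
    Submodule.smul_mem _ _ (IsCreationMonomial.cons i hk hv).mem_creationSpan

theorem IsCreationMonomial.apply_mem_creationSpan [Fintype ι] (hρ : IsRep g B ρ)
    (hβ : ∀ i, β i ∈ g (p i)) (hgs : ∀ w, ι₀ w ∈ gs ρ) {n : ℕ} {v : P}
    (hv : IsCreationMonomial ρ β ι₀ n v) (j : ι) {m : ℤ} (hm : 0 < m) :
    ρ (β j) m v ∈ creationSpan ρ β ι₀ := by
  induction hv with
  | of w => rw [hgs w _ m hm]; exact zero_mem _
  | @cons n v i k hk hv ih =>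
    rw [← Module.End.mul_apply, hρ.mul_eq (hβ j) (hβ i) hm.ne' hk.ne, LinearMap.add_apply,
      LinearMap.smul_apply, LinearMap.smul_apply, Module.End.mul_apply, Module.End.one_apply]
    exact add_mem (Submodule.smul_mem _ _ (creationSpan_le_comap_of_neg _ hk ih))
      (Submodule.smul_mem _ _ hv.mem_creationSpan)

theorem creationSpan_le_comap [Fintype ι] (hρ : IsRep g B ρ) (hβ : ∀ i, β i ∈ g (p i))
    (hgs : ∀ w, ι₀ w ∈ gs ρ) (a : V) {m : ℤ} (hm : m ≠ 0) :
    creationSpan ρ β ι₀ ≤ (creationSpan ρ β ι₀).comap (ρ a m) := by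
  rcases hm.lt_or_gt with hm | hm
  · exact creationSpan_le_comap_of_neg a hm
  refine Submodule.span_le.mpr fun v ⟨n, hv⟩ => ?_
  rw [SetLike.mem_coe, Submodule.mem_comap, apply_eq_sum_basis_repr ρ β]
  exact Submodule.sum_mem _ fun j _ =>
    Submodule.smul_mem _ _ (hv.apply_mem_creationSpan hρ hβ hgs j hm)

theorem IsCreationMonomial.exists_mem_killedAbove [Fintype ι] (hρ : IsRep g B ρ)
    (hβ : ∀ i, β i ∈ g (p i)) (hgs : ∀ w, ι₀ w ∈ gs ρ) {n : ℕ} {v : P}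
    (hv : IsCreationMonomial ρ β ι₀ n v) : ∃ d, v ∈ killedAbove ρ d := by
  induction hv with
  | of w => exact ⟨0, hgs w⟩
  | @cons n v i k hk hv ih =>
    obtain ⟨d, hd⟩ := ih
    refine ⟨max d (-k), fun a m hm => ?_⟩
    rw [apply_eq_sum_basis_repr ρ β]
    refine Finset.sum_eq_zero fun j _ => ?_
    rw [← Module.End.mul_apply, hρ.mul_eq_of_add_ne_zero (hβ j) (hβ i) (by omega) hk.ne (by omega),
      LinearMap.smul_apply, Module.End.mul_apply, hd _ _ (by omega), map_zero, smul_zero,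
      smul_zero]

theorem IsCreationMonomial.mem_eigenspace_numberOp [Fintype ι] [DecidableEq ι]
    {α : Module.Basis ι ℂ V} (hS : IsSmooth ρ)
    (hρ : IsRep g B ρ) (hα : ∀ i, α i ∈ g (p i)) (hβ : ∀ i, β i ∈ g (p i))
    (hdual : ∀ i j, B (α i) (β j) = if i = j then 1 else 0) (hgs : ∀ w, ι₀ w ∈ gs ρ)
    {n : ℕ} {v : P} (hv : IsCreationMonomial ρ β ι₀ n v) :
    v ∈ (numberOp ρ α β hS).eigenspace (n : ℂ) := by
  induction hv with
  | of w => rw [Nat.cast_zero]; exact gs_le_eigenspace_zero hS (hgs w)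
  | @cons n v i k hk hv ih =>
    rw [Nat.cast_succ]
    exact beta_mem_eigenspace_numberOp hS hρ hα hβ hdual i hk ih

end CreationMonomials

section InducedModule

variable {ι : Type} [Fintype ι]
variable {g : ZMod 2 → Submodule ℂ V} {B : V →ₗ[ℂ] V →ₗ[ℂ] ℂ}
variable {W J : Type} [AddCommGroup W] [Module ℂ W] [AddCommGroup J] [Module ℂ J]
variable {ρJ : V →ₗ[ℂ] ℤ → Module.End ℂ J} {ιJ : W →ₗ[ℂ] J}
variable {α β : Module.Basis ι ℂ V} {p : ι → ZMod 2}

theorem IsInducedFrom.creationSpan_eq_top (hJ : IsInducedFrom g B ρJ ιJ)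
    (hβ : ∀ i, β i ∈ g (p i)) : creationSpan ρJ β ιJ = ⊤ :=
  hJ.eq_top (fun a _ hm => creationSpan_le_comap hJ.1 hβ hJ.2.1 a hm) range_le_creationSpan

theorem IsInducedFrom.isSmooth (hJ : IsInducedFrom g B ρJ ιJ) (hβ : ∀ i, β i ∈ g (p i)) :
    IsSmooth ρJ := by
  intro v
  have hv : v ∈ creationSpan ρJ β ιJ := hJ.creationSpan_eq_top hβ ▸ Submodule.mem_top
  induction hv using Submodule.span_induction with
  | mem v hv =>
    obtain ⟨n, hv⟩ := hv
    exact hv.exists_mem_killedAbove hJ.1 hβ hJ.2.1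
  | zero => exact ⟨0, zero_mem _⟩
  | add v w _ _ hv hw =>
    obtain ⟨d, hd⟩ := hv
    obtain ⟨d', hd'⟩ := hw
    exact ⟨max d d', add_mem (killedAbove_mono (le_max_left d d') hd)
      (killedAbove_mono (le_max_right d d') hd')⟩
  | smul c v _ hv =>
    obtain ⟨d, hd⟩ := hv
    exact ⟨d, Submodule.smul_mem _ c hd⟩

theorem IsInducedFrom.range_sup_iSup_eigenspace_numberOp_eq_top [DecidableEq ι]
    (hJ : IsInducedFrom g B ρJ ιJ)
    (hS : IsSmooth ρJ) (hα : ∀ i, α i ∈ g (p i)) (hβ : ∀ i, β i ∈ g (p i))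
    (hdual : ∀ i j, B (α i) (β j) = if i = j then 1 else 0) :
    LinearMap.range ιJ ⊔ ⨆ n : ℕ, (numberOp ρJ α β hS).eigenspace ((n : ℂ) + 1) = ⊤ := by
  rw [eq_top_iff, ← hJ.creationSpan_eq_top hβ]
  refine Submodule.span_le.mpr fun v ⟨n, hv⟩ => ?_
  have hv' := hv.mem_eigenspace_numberOp hS hJ.1 hα hβ hdual hJ.2.1
  cases hv with
  | of w => exact Submodule.mem_sup_left (LinearMap.mem_range_self ιJ w)
  | @cons n v i k hk _ =>
    rw [Nat.cast_succ] at hv'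
    exact Submodule.mem_sup_right (Submodule.mem_iSup_of_mem n hv')

theorem IsInducedFrom.eigenspace_numberOp_zero_le_range [DecidableEq ι]
    (hJ : IsInducedFrom g B ρJ ιJ)
    (hS : IsSmooth ρJ) (hα : ∀ i, α i ∈ g (p i)) (hβ : ∀ i, β i ∈ g (p i))
    (hdual : ∀ i j, B (α i) (β j) = if i = j then 1 else 0) :
    (numberOp ρJ α β hS).eigenspace 0 ≤ LinearMap.range ιJ := by
  intro v hv
  obtain ⟨r, hr, s, hs, rfl⟩ : ∃ r ∈ LinearMap.range ιJ, ∃ s ∈ _, r + s = v :=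
    Submodule.mem_sup.mp
      ((hJ.range_sup_iSup_eigenspace_numberOp_eq_top hS hα hβ hdual).ge Submodule.mem_top)
  have hr0 : r ∈ (numberOp ρJ α β hS).eigenspace 0 := by
    obtain ⟨w, rfl⟩ := hr
    exact gs_le_eigenspace_zero hS (hJ.2.1 w)
  have hs0 : s = 0 := Submodule.disjoint_def.mp
    disjoint_eigenspace_zero_iSup_eigenspace_natCast_add_one s
    (by simpa using sub_mem hv hr0) hs
  rwa [hs0, add_zero]

theorem IsInducedFrom.iSup_eigenspace_numberOp_eq_top [DecidableEq ι] (hJ : IsInducedFrom g B ρJ ιJ)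
    (hS : IsSmooth ρJ) (hα : ∀ i, α i ∈ g (p i)) (hβ : ∀ i, β i ∈ g (p i))
    (hdual : ∀ i j, B (α i) (β j) = if i = j then 1 else 0) :
    ⨆ n : ℕ, (numberOp ρJ α β hS).eigenspace (n : ℂ) = ⊤ := by
  rw [eq_top_iff, ← hJ.range_sup_iSup_eigenspace_numberOp_eq_top hS hα hβ hdual]
  refine sup_le ?_ (iSup_mono' fun n => ⟨n + 1, by rw [Nat.cast_succ]⟩)
  intro v ⟨w, hw⟩
  refine Submodule.mem_iSup_of_mem 0 ?_
  rw [Nat.cast_zero, ← hw]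
  exact gs_le_eigenspace_zero hS (hJ.2.1 w)

theorem IsInducedFrom.eq_zero_of_mem_eigenspace_numberOp [DecidableEq ι] {M : Type}
    [AddCommGroup M] [Module ℂ M] {ρM : V →ₗ[ℂ] ℤ → Module.End ℂ M}
    (hJ : IsInducedFrom g B ρJ ιJ) (hS : IsSmooth ρJ) (hα : ∀ i, α i ∈ g (p i))
    (hβ : ∀ i, β i ∈ g (p i))
    (hdual : ∀ i j, B (α i) (β j) = if i = j then 1 else 0)
    (hsymm : ∀ (i j : ZMod 2) (x y : V), x ∈ g i → y ∈ g j →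
      B x y = (-1 : ℂ) ^ (i.val * j.val) * B y x)
    {F : J →ₗ[ℂ] M} (hF : Intertwines ρJ ρM F) (hFι : Function.Injective (F ∘ₗ ιJ)) (n : ℕ)
    {x : J} (hx : x ∈ (numberOp ρJ α β hS).eigenspace (n : ℂ)) (hFx : F x = 0) : x = 0 := by
  induction n generalizing x with
  | zero =>
    rw [Nat.cast_zero] at hx
    obtain ⟨w, rfl⟩ := hJ.eigenspace_numberOp_zero_le_range hS hα hβ hdual hx
    rw [hFι (by simpa using hFx : (F ∘ₗ ιJ) w = (F ∘ₗ ιJ) 0), map_zero]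
  | succ n ih =>
    have hgs : x ∈ gs ρJ := fun a m hm => by
      rw [apply_eq_sum_basis_repr ρJ α]
      refine Finset.sum_eq_zero fun j _ => ?_
      have hxj := alpha_mem_eigenspace_numberOp hS hJ.1 hα hβ hdual hsymm j hm hx
      rw [Nat.cast_succ, add_sub_cancel_right] at hxj
      rw [ih hxj (by rw [hF.apply _ hm.ne', hFx, map_zero]), smul_zero]
    have h := mem_eigenspace_iff.mp hx
    rw [numberOp_apply_of_mem_gs hgs, eq_comm, smul_eq_zero] at h
    exact h.resolve_left (Nat.cast_ne_zero.mpr n.succ_ne_zero)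

end InducedModule

theorem induced_from_ground_states_iso_general
    {ι : Type} [Fintype ι] [DecidableEq ι]
    (g : ZMod 2 → Submodule ℂ V)
    (B : V →ₗ[ℂ] V →ₗ[ℂ] ℂ)
    (α β : Module.Basis ι ℂ V)
    (hdual : ∀ i j, B (α i) (β j) = if i = j then 1 else 0)
    (p : ι → ZMod 2)
    (hα : ∀ i, (α i : V) ∈ g (p i)) (hβ : ∀ i, (β i : V) ∈ g (p i))
    (hsym : ∀ (i j : ZMod 2) (x y : V), x ∈ g i → y ∈ g j →
      B x y = (-1 : ℂ) ^ (i.val * j.val) * B y x)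
    {M J : Type} [AddCommGroup M] [Module ℂ M] [AddCommGroup J] [Module ℂ J]
    (ρM : V →ₗ[ℂ] ℤ → Module.End ℂ M) (hM : IsRep g B ρM) (hbdd : BoundedBelow ρM)
    (ρJ : V →ₗ[ℂ] ℤ → Module.End ℂ J) (ιJ : (gs ρM : Submodule ℂ M) →ₗ[ℂ] J)
    (hJ : IsInducedFrom g B ρJ ιJ)
    (F : J →ₗ[ℂ] M) (hF : Intertwines ρJ ρM F)
    (hFι : F ∘ₗ ιJ = (gs ρM).subtype) :
    Function.Bijective F := by
  have hSJ := hJ.isSmooth hβ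
  have hSM := hbdd.isSmooth
  have hker : ∀ (n : ℕ), ∀ x ∈ (numberOp ρJ α β hSJ).eigenspace (n : ℂ), F x = 0 → x = 0 :=
    fun n _ hx => hJ.eq_zero_of_mem_eigenspace_numberOp hSJ hα hβ hdual hsym hF
      (hFι ▸ (gs ρM).injective_subtype) n hx
  have hgs : gs ρM ≤ LinearMap.range F := by
    rw [← (gs ρM).range_subtype, ← hFι]
    exact LinearMap.range_comp_le_range ιJ F
  refine ⟨injective_of_iSup_eq_top_of_iSupIndep F
    (hJ.iSup_eigenspace_numberOp_eq_top hSJ hα hβ hdual)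
    ((numberOp ρM α β hSM).eigenspaces_iSupIndep.comp Nat.cast_injective)
    (fun n => hF.eigenspace_numberOp_le_comap hSJ hSM n) hker, ?_⟩
  rw [← LinearMap.range_eq_top]
  exact eq_top_of_gs_le_of_iSup_eigenspace_numberOp_eq_top hSM hM hα hβ hdual hsym
    (hbdd.iSup_eigenspace_numberOp_eq_top hM hα hβ hdual) (fun a _ hm => hF.range_le_comap a hm)
    hgs

/-- Every `h̃`-module `M` which is bounded below is isomorphic, via the
canonical map extending the inclusion of ground states, to the module induced from
`M_gs`: if `J` is induced from `gs ρM` (universal property) and `F : J → M` is the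
canonical morphism with `F ∘ ιJ = inclusion`, then `F` is an isomorphism. -/
theorem induced_from_ground_states_iso
    {ι : Type} [Fintype ι] [DecidableEq ι]
    (g : ZMod 2 → Submodule ℂ V) [DirectSum.Decomposition g]
    (B : V →ₗ[ℂ] V →ₗ[ℂ] ℂ)
    (α β : Module.Basis ι ℂ V)
    (hdual : ∀ i j, B (α i) (β j) = if i = j then 1 else 0)
    (p : ι → ZMod 2)
    (hα : ∀ i, (α i : V) ∈ g (p i)) (hβ : ∀ i, (β i : V) ∈ g (p i))
    (heven : ∀ (i j : ZMod 2) (x y : V), x ∈ g i → y ∈ g j → i ≠ j → B x y = 0)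
    (hsym : ∀ (i j : ZMod 2) (x y : V), x ∈ g i → y ∈ g j →
      B x y = (-1 : ℂ) ^ (i.val * j.val) * B y x)
    {M J : Type} [AddCommGroup M] [Module ℂ M] [AddCommGroup J] [Module ℂ J]
    (ρM : V →ₗ[ℂ] ℤ → Module.End ℂ M) (hM : IsRep g B ρM) (hbdd : BoundedBelow ρM)
    (ρJ : V →ₗ[ℂ] ℤ → Module.End ℂ J) (ιJ : (gs ρM : Submodule ℂ M) →ₗ[ℂ] J)
    (hJ : IsInducedFrom g B ρJ ιJ)
    (F : J →ₗ[ℂ] M) (hF : Intertwines ρJ ρM F)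
    (hFι : F ∘ₗ ιJ = (gs ρM).subtype) :
    Function.Bijective F :=
  induced_from_ground_states_iso_general g B α β hdual p hα hβ hsym ρM hM hbdd ρJ ιJ hJ F hF hFι

end Stmt9
end

section
/- Let h = ℂ^{0|2} with odd basis χ⁺, χ⁻. Define representations ξ_{k,ε,δ} (k ∈ ℤ_{≥0}, ε,δ ∈ {0,1}) on ℂ^{k+ε+δ|k+1} by χ⁺eⁱ = oⁱ⁺¹, χ⁻eⁱ = oⁱ, χ⁺e^{[ε]} = o¹, χ⁻e^{[ε]} = 0, χ⁺e^{[δ]} = 0, χ⁻e^{[δ]} = o^{k+1}, and χ^± oⁱ = 0. Then in ξ_{k,ε,δ}, the joint kernel of χ⁺ and χ⁻ is exactly the odd part V₁ of dimension 0|(k+1); consequently the representations ξ_{k,ε,δ} and their parity shifts ξ_{k,ε,δ} ⊗ ℂ^{0|1} are pairwise non-isomorphic for distinct (k,ε,δ) with the same underlying dimension of joint kernel distinguishing parity shifts. -/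
namespace Stmt11

/-- Index type for the even basis vectors `e^{[ε]}, e¹, …, e^k, e^{[δ]}` of
`ξ_{k,ε,δ}`: elements of `Fin (k+2)`, where index `0` (the vector `e^{[ε]}`) is present
only if `ε = 1` and index `k+1` (the vector `e^{[δ]}`) only if `δ = 1`; the indices
`1,…,k` are the vectors `e¹,…,e^k`. -/
def EIdx (k : ℕ) (ε δ : Bool) : Type :=
  {i : Fin (k + 2) // (i = 0 → ε = true) ∧ (i = Fin.last (k + 1) → δ = true)}

instance (k : ℕ) (ε δ : Bool) : Fintype (EIdx k ε δ) := by
  unfold EIdx; infer_instance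

instance (k : ℕ) (ε δ : Bool) : DecidableEq (EIdx k ε δ) := by
  unfold EIdx; infer_instance

/-- The underlying super-vector space of `ξ_{k,ε,δ}`: even part of dimension `k+ε+δ`
spanned by the `e`'s, odd part of dimension `k+1` spanned by `o¹,…,o^{k+1}`
(0-indexed below). -/
abbrev Xi (k : ℕ) (ε δ : Bool) : Type := (EIdx k ε δ → ℂ) × (Fin (k + 1) → ℂ)

/-- The action of `χ⁺`: `χ⁺ eⁱ = oⁱ⁺¹` (`1 ≤ i ≤ k`), `χ⁺ e^{[ε]} = o¹`,
`χ⁺ e^{[δ]} = 0`, `χ⁺ oⁱ = 0`.  (In 0-indexed form: the even basis vector of index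
`i : Fin (k+2)`, `i ≠ k+1`, is sent to the odd basis vector of index `i`.) -/
noncomputable def chiP (k : ℕ) (ε δ : Bool) : Xi k ε δ →ₗ[ℂ] Xi k ε δ where
  toFun v := (0, fun j => ∑ i : EIdx k ε δ, if ((i.1 : ℕ) = (j : ℕ)) then v.1 i else 0)
  map_add' v w := by
    ext j
    · simp
    · dsimp only
      simp only [Prod.mk_add_mk, Pi.add_apply]
      rw [← Finset.sum_add_distrib]
      exact Finset.sum_congr rfl fun i _ => by split <;> simp
  map_smul' c v := by
    ext j
    · simp
    · simp [Finset.mul_sum, mul_ite]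

/-- The action of `χ⁻`: `χ⁻ eⁱ = oⁱ` (`1 ≤ i ≤ k`), `χ⁻ e^{[ε]} = 0`,
`χ⁻ e^{[δ]} = o^{k+1}`, `χ⁻ oⁱ = 0`.  (In 0-indexed form: the even basis vector of
index `i ≠ 0` is sent to the odd basis vector of index `i - 1`.) -/
noncomputable def chiM (k : ℕ) (ε δ : Bool) : Xi k ε δ →ₗ[ℂ] Xi k ε δ where
  toFun v := (0, fun j => ∑ i : EIdx k ε δ, if ((i.1 : ℕ) = (j : ℕ) + 1) then v.1 i else 0)
  map_add' v w := by
    ext j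
    · simp
    · dsimp only
      simp only [Prod.mk_add_mk, Pi.add_apply]
      rw [← Finset.sum_add_distrib]
      exact Finset.sum_congr rfl fun i _ => by split <;> simp
  map_smul' c v := by
    ext j
    · simp
    · simp [Finset.mul_sum, mul_ite]

/-! The joint kernel of `χ⁺` and `χ⁻` is the odd part, of dimension `k + 1`, and the even
vectors killed by `χ⁻` (resp. `χ⁺`) are the multiples of `e^{[ε]}` (resp. `e^{[δ]}`), so this
space is nonzero exactly when `ε = 1` (resp. `δ = 1`). An isomorphism intertwining `χ^±` maps
kernels onto kernels, and a parity-preserving one maps the even part onto the even part, since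
the even and odd parts are complementary on both sides. Hence it preserves `k`, `ε` and `δ`. -/

section Intertwining

variable {R V W : Type*} [Semiring R] [AddCommMonoid V] [Module R V] [AddCommMonoid W]
  [Module R W]

theorem _root_.LinearEquiv.map_ker_eq_ker_of_intertwines (e : V ≃ₗ[R] W) {f : V →ₗ[R] V}
    {g : W →ₗ[R] W} (h : ∀ v, e (f v) = g (e v)) :
    (LinearMap.ker f).map (e : V →ₗ[R] W) = LinearMap.ker g := by
  ext w
  rw [Submodule.map_equiv_eq_comap_symm, Submodule.mem_comap, LinearMap.mem_ker,
    LinearMap.mem_ker, ← e.map_eq_zero_iff, LinearEquiv.coe_coe, h, e.apply_symm_apply]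

end Intertwining

theorem _root_.eq_of_le_of_disjoint_of_codisjoint {α : Type*} [Lattice α] [BoundedOrder α]
    [IsModularLattice α] {a b p q : α} (hap : a ≤ p) (hbq : b ≤ q) (hab : Codisjoint a b)
    (hpq : Disjoint p q) : a = p := by
  refine le_antisymm hap ?_
  calc p = (a ⊔ b) ⊓ p := by rw [hab.eq_top, top_inf_eq]
    _ = a ⊔ b ⊓ p := sup_inf_assoc_of_le b hap
    _ ≤ a := sup_le le_rfl ((inf_le_inf_right p hbq).trans (hpq.symm.eq_bot.trans_le bot_le))

section Graded

variable {R M₀ M₁ N₀ N₁ : Type*} [Ring R] [AddCommGroup M₀] [Module R M₀] [AddCommGroup M₁]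
  [Module R M₁] [AddCommGroup N₀] [Module R N₀] [AddCommGroup N₁] [Module R N₁]

theorem _root_.LinearEquiv.map_range_inl_eq_of_graded (e : (M₀ × M₁) ≃ₗ[R] (N₀ × N₁))
    (h₀ : ∀ x, (e (x, 0)).2 = 0) (h₁ : ∀ y, (e (0, y)).1 = 0) :
    (LinearMap.range (LinearMap.inl R M₀ M₁)).map (e : (M₀ × M₁) →ₗ[R] (N₀ × N₁)) =
      LinearMap.range (LinearMap.inl R N₀ N₁) := by
  refine eq_of_le_of_disjoint_of_codisjoint (b := (LinearMap.range (LinearMap.inr R M₀ M₁)).map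
    (e : (M₀ × M₁) →ₗ[R] (N₀ × N₁))) (q := LinearMap.range (LinearMap.inr R N₀ N₁)) ?_ ?_ ?_
    LinearMap.isCompl_range_inl_inr.disjoint
  · rintro _ ⟨_, ⟨x, rfl⟩, rfl⟩
    rw [← LinearMap.ker_snd]
    exact h₀ x
  · rintro _ ⟨_, ⟨y, rfl⟩, rfl⟩
    rw [← LinearMap.ker_fst]
    exact h₁ y
  · rw [codisjoint_iff, ← Submodule.map_sup, LinearMap.isCompl_range_inl_inr.sup_eq_top,
      Submodule.map_top, LinearEquiv.range]

end Graded

theorem _root_.LinearMap.range_inl_inf_ker_ne_bot_iff {R M N P : Type*} [Semiring R]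
    [AddCommMonoid M] [Module R M] [AddCommMonoid N] [Module R N] [AddCommMonoid P] [Module R P]
    (f : M × N →ₗ[R] P) :
    LinearMap.range (LinearMap.inl R M N) ⊓ LinearMap.ker f ≠ ⊥ ↔
      ∃ x : M, x ≠ 0 ∧ f (x, 0) = 0 := by
  rw [Submodule.ne_bot_iff]
  constructor
  · rintro ⟨_, ⟨⟨x, rfl⟩, hx⟩, hne⟩
    exact ⟨x, fun h => hne (by rw [h, map_zero]), hx⟩
  · rintro ⟨x, hne, hx⟩
    exact ⟨(x, 0), ⟨⟨x, rfl⟩, hx⟩, fun h => hne (congr_arg Prod.fst h)⟩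

section Xi

variable {k : ℕ} {ε δ : Bool}

theorem chiP_apply_snd (v : Xi k ε δ) (j : Fin (k + 1)) :
    (chiP k ε δ v).2 j = ∑ i : EIdx k ε δ, (if (i.1 : ℕ) = j then v.1 i else 0) := rfl

theorem chiM_apply_snd (v : Xi k ε δ) (j : Fin (k + 1)) :
    (chiM k ε δ v).2 j = ∑ i : EIdx k ε δ, (if (i.1 : ℕ) = j + 1 then v.1 i else 0) := rfl

theorem sum_ite_val_eq (x : EIdx k ε δ → ℂ) {m : ℕ} (i₀ : EIdx k ε δ) (h : (i₀.1 : ℕ) = m) :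
    ∑ i : EIdx k ε δ, (if (i.1 : ℕ) = m then x i else 0) = x i₀ := by
  have hval : ∀ i : EIdx k ε δ, (i.1 : ℕ) = m ↔ i = i₀ := fun i =>
    ⟨fun hi => Subtype.ext (Fin.ext (hi.trans h.symm)), fun hi => hi ▸ h⟩
  simp only [hval, Finset.sum_ite_eq', Finset.mem_univ, if_true]

theorem chiP_eq_zero_iff (v : Xi k ε δ) :
    chiP k ε δ v = 0 ↔ ∀ i : EIdx k ε δ, i.1 ≠ Fin.last (k + 1) → v.1 i = 0 := by
  constructor
  · intro h i hi
    have hik : (i.1 : ℕ) < k + 1 := Fin.val_lt_last hi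
    rw [← sum_ite_val_eq v.1 i (m := (⟨i.1, hik⟩ : Fin (k + 1))) rfl, ← chiP_apply_snd, h]
    rfl
  · intro h
    refine Prod.ext rfl (funext fun j => ?_)
    rw [chiP_apply_snd]
    refine Finset.sum_eq_zero fun i _ => ?_
    split_ifs with hij
    · exact h i (Fin.ne_of_lt (by simp [Fin.lt_def, hij, Nat.lt_succ_iff.mp j.isLt]))
    · rfl

theorem chiM_eq_zero_iff (v : Xi k ε δ) :
    chiM k ε δ v = 0 ↔ ∀ i : EIdx k ε δ, i.1 ≠ 0 → v.1 i = 0 := by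
  constructor
  · intro h i hi
    have hpos : 0 < (i.1 : ℕ) := Fin.pos_of_ne_zero hi
    have hik : (i.1 : ℕ) - 1 < k + 1 := by omega
    rw [← sum_ite_val_eq v.1 i (m := (⟨(i.1 : ℕ) - 1, hik⟩ : Fin (k + 1)) + 1) (by simp; omega),
      ← chiM_apply_snd, h]
    rfl
  · intro h
    refine Prod.ext rfl (funext fun j => ?_)
    rw [chiM_apply_snd]
    refine Finset.sum_eq_zero fun i _ => ?_
    split_ifs with hij
    · exact h i (fun hi => by simp [hi] at hij)
    · rfl

theorem chiP_eq_zero_and_chiM_eq_zero_iff (v : Xi k ε δ) :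
    (chiP k ε δ v = 0 ∧ chiM k ε δ v = 0) ↔ v.1 = 0 := by
  rw [chiP_eq_zero_iff, chiM_eq_zero_iff, funext_iff, ← forall_and]
  refine forall_congr' fun i => ⟨fun ⟨hP, hM⟩ => ?_, fun hi => ⟨fun _ => hi, fun _ => hi⟩⟩
  by_cases h0 : i.1 = 0
  · exact hP (by rw [h0]; exact Fin.last_pos.ne)
  · exact hM h0

theorem finrank_ker_chiP_inf_ker_chiM :
    Module.finrank ℂ ↥(LinearMap.ker (chiP k ε δ) ⊓ LinearMap.ker (chiM k ε δ)) = k + 1 := by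
  have hker : LinearMap.ker (chiP k ε δ) ⊓ LinearMap.ker (chiM k ε δ) =
      LinearMap.range (LinearMap.inr ℂ (EIdx k ε δ → ℂ) (Fin (k + 1) → ℂ)) := by
    ext v
    rw [← LinearMap.ker_fst, Submodule.mem_inf, LinearMap.mem_ker, LinearMap.mem_ker,
      LinearMap.mem_ker, chiP_eq_zero_and_chiM_eq_zero_iff, LinearMap.fst_apply]
  rw [hker, LinearMap.finrank_range_of_inj LinearMap.inr_injective,
    Module.finrank_fin_fun]

theorem exists_ne_zero_forall_val_ne_iff (a : Fin (k + 2)) :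
    (∃ x : EIdx k ε δ → ℂ, x ≠ 0 ∧ ∀ i : EIdx k ε δ, i.1 ≠ a → x i = 0) ↔
      ∃ i : EIdx k ε δ, i.1 = a := by
  constructor
  · rintro ⟨x, hne, hx⟩
    obtain ⟨i, hi⟩ := Function.ne_iff.mp hne
    exact ⟨i, not_imp_comm.mp (hx i) hi⟩
  · rintro ⟨i₀, rfl⟩
    exact ⟨Pi.single i₀ 1, by simp,
      fun i hi => Pi.single_eq_of_ne (fun h => hi (congr_arg Subtype.val h)) 1⟩

theorem range_inl_inf_ker_chiM_ne_bot_iff :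
    LinearMap.range (LinearMap.inl ℂ _ _) ⊓ LinearMap.ker (chiM k ε δ) ≠ ⊥ ↔ ε = true := by
  simp_rw [LinearMap.range_inl_inf_ker_ne_bot_iff, chiM_eq_zero_iff,
    exists_ne_zero_forall_val_ne_iff]
  exact ⟨fun ⟨i, hi⟩ => i.2.1 hi,
    fun hε => ⟨⟨0, fun _ => hε, fun h => absurd h Fin.last_pos.ne⟩, rfl⟩⟩

theorem range_inl_inf_ker_chiP_ne_bot_iff :
    LinearMap.range (LinearMap.inl ℂ _ _) ⊓ LinearMap.ker (chiP k ε δ) ≠ ⊥ ↔ δ = true := by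
  simp_rw [LinearMap.range_inl_inf_ker_ne_bot_iff, chiP_eq_zero_iff,
    exists_ne_zero_forall_val_ne_iff]
  exact ⟨fun ⟨i, hi⟩ => i.2.2 hi,
    fun hδ => ⟨⟨Fin.last _, fun h => absurd h Fin.last_pos.ne', fun _ => hδ⟩, rfl⟩⟩

end Xi

/-- In the representation `ξ_{k,ε,δ}` of `h = ℂ^{0|2}`, the joint
kernel of `χ⁺` and `χ⁻` is exactly the odd part `V₁` (of dimension `0|(k+1)`);
consequently, representations with distinct parameters `(k,ε,δ)` are never isomorphic
as super-representations (by a parity-preserving isomorphism intertwining the action of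
`χ⁺` and `χ⁻`). -/
theorem xi_joint_kernel_and_nonisomorphic (k : ℕ) (ε δ : Bool) :
    (∀ v : Xi k ε δ, (chiP k ε δ v = 0 ∧ chiM k ε δ v = 0) ↔ v.1 = 0) ∧
    (∀ (k' : ℕ) (ε' δ' : Bool), (k, ε, δ) ≠ (k', ε', δ') →
      ¬ ∃ e : Xi k ε δ ≃ₗ[ℂ] Xi k' ε' δ',
        (∀ x : EIdx k ε δ → ℂ, (e (x, 0)).2 = 0) ∧
        (∀ y : Fin (k + 1) → ℂ, (e (0, y)).1 = 0) ∧
        (∀ v : Xi k ε δ, e (chiP k ε δ v) = chiP k' ε' δ' (e v)) ∧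
        (∀ v : Xi k ε δ, e (chiM k ε δ v) = chiM k' ε' δ' (e v))) := by
  refine ⟨chiP_eq_zero_and_chiM_eq_zero_iff, ?_⟩
  rintro k' ε' δ' hne ⟨e, heven, hodd, hP, hM⟩
  have hPker := e.map_ker_eq_ker_of_intertwines hP
  have hMker := e.map_ker_eq_ker_of_intertwines hM
  have hinl := e.map_range_inl_eq_of_graded heven hodd
  have hk : k + 1 = k' + 1 := by
    have := e.finrank_map_eq (LinearMap.ker (chiP k ε δ) ⊓ LinearMap.ker (chiM k ε δ))
    rwa [Submodule.map_inf _ e.injective, hPker, hMker, finrank_ker_chiP_inf_ker_chiM,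
      finrank_ker_chiP_inf_ker_chiM, eq_comm] at this
  have hε : ε = ε' := by
    rw [Bool.eq_iff_iff, ← range_inl_inf_ker_chiM_ne_bot_iff, ← range_inl_inf_ker_chiM_ne_bot_iff,
      ← hinl, ← hMker, ← Submodule.map_inf _ e.injective, Ne, Ne, Submodule.map_eq_bot_iff]
  have hδ : δ = δ' := by
    rw [Bool.eq_iff_iff, ← range_inl_inf_ker_chiP_ne_bot_iff, ← range_inl_inf_ker_chiP_ne_bot_iff,
      ← hinl, ← hPker, ← Submodule.map_inf _ e.injective, Ne, Ne, Submodule.map_eq_bot_iff]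
  exact hne (by rw [Nat.succ_injective hk, hε, hδ])

end Stmt11
end

section
/- The complete elliptic integrals of the first and second kind, K(x) = ∫₀¹ dt/√((1−t²)(1−xt²)) and E(x) = ∫₀¹ √(1−xt²)/√(1−t²) dt, satisfy (d/dx)(K(1−x)/K(x)) = −(π/4)/(x(1−x)K(x)²) for x ∈ (0,1). -/
/-
Substituting `t = sin θ` turns `K` and `E` into `I (-1/2)` and `I (1/2)`, where
`I s x = ∫₀^{π/2} (1 - x sin²θ)^s dθ` has a continuous integrand and may be differentiated under
the integral sign: `x I_s' = s (I_s - I_{s-1})`. Together with the contiguous relation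
`(1 - x) I_{-3/2} = I_{1/2}` this gives the classical formulas for `dK/dx` and `dE/dx`. With them,
Legendre's form `E K₁ + E₁ K - K K₁` (where `K₁ = K(1 - x)`, `E₁ = E(1 - x)`) has zero derivative
on `(0, 1)`, and its limit at `0⁺` is `π/2` because `K₁ = O(x^{-1/2})` and `E - K = O(x)`.
By the quotient rule and the formula for `dK/dx`, the numerator of the derivative of `K₁ / K` is
`-(E K₁ + E₁ K - K K₁) / (2x(1 - x)) = -π / (4x(1 - x))`.
-/

open Real

namespace Stmt17

/-- The complete elliptic integral of the first kind,
`K(x) = ∫₀¹ dt / √((1−t²)(1−xt²))`. -/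
noncomputable def Kell (x : ℝ) : ℝ :=
  ∫ t in (0 : ℝ)..1, 1 / Real.sqrt ((1 - t ^ 2) * (1 - x * t ^ 2))

/-- The complete elliptic integral of the second kind,
`E(x) = ∫₀¹ √(1−xt²)/√(1−t²) dt`. -/
noncomputable def Eell (x : ℝ) : ℝ :=
  ∫ t in (0 : ℝ)..1, Real.sqrt (1 - x * t ^ 2) / Real.sqrt (1 - t ^ 2)

open Set Filter Topology Function MeasureTheory intervalIntegral
open scoped Interval

theorem hasDerivAt_intervalIntegral_of_continuousOn {E : Type*} [NormedAddCommGroup E]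
    [NormedSpace ℝ E] {F F' : ℝ → ℝ → E} {a b x₀ : ℝ} {s : Set ℝ} (hs : s ∈ 𝓝 x₀)
    (hsc : IsCompact s) (hF : ContinuousOn (uncurry F) (s ×ˢ [[a, b]]))
    (hF' : ContinuousOn (uncurry F') (s ×ˢ [[a, b]]))
    (hderiv : ∀ x ∈ s, ∀ t ∈ [[a, b]], HasDerivAt (F · t) (F' x t) x) :
    HasDerivAt (fun x => ∫ t in a..b, F x t) (∫ t in a..b, F' x₀ t) x₀ := by
  have hx₀ : x₀ ∈ s := mem_of_mem_nhds hs
  obtain ⟨C, hC⟩ := (hsc.prod isCompact_uIcc).exists_bound_of_continuousOn hF'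
  have hmeas {G : ℝ → ℝ → E} (hG : ContinuousOn (uncurry G) (s ×ˢ [[a, b]])) {x : ℝ}
      (hx : x ∈ s) : AEStronglyMeasurable (G x) (volume.restrict (Ι a b)) :=
    ((hG.uncurry_left x hx).mono uIoc_subset_uIcc).aestronglyMeasurable measurableSet_uIoc
  refine (hasDerivAt_integral_of_dominated_loc_of_deriv_le (bound := fun _ => C) hs
    (eventually_of_mem hs fun x hx => hmeas hF hx) (hF.uncurry_left x₀ hx₀).intervalIntegrable
    (hmeas hF' hx₀) ?_ intervalIntegrable_const ?_).2
  · exact ae_of_all _ fun t ht x hx => hC (x, t) ⟨hx, uIoc_subset_uIcc ht⟩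
  · exact ae_of_all _ fun t ht x hx => hderiv x hx t (uIoc_subset_uIcc ht)

theorem integral_div_sqrt_one_sub_sq_eq_integral_comp_sin (g : ℝ → ℝ) :
    ∫ t in (0 : ℝ)..1, g t / √(1 - t ^ 2) = ∫ θ in (0 : ℝ)..π / 2, g (sin θ) := by
  have hsub : Icc 0 (π / 2) ⊆ Icc (-(π / 2)) (π / 2) :=
    Icc_subset_Icc (by linarith [pi_pos]) le_rfl
  have himage : sin '' Ioo 0 (π / 2) = Ioo 0 1 := by
    rw [continuous_sin.continuousOn.image_Ioo_of_strictMonoOn (by positivity)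
      (strictMonoOn_sin.mono hsub), sin_zero, sin_pi_div_two]
  rw [integral_of_le zero_le_one, integral_of_le (by positivity), integral_Ioc_eq_integral_Ioo,
    integral_Ioc_eq_integral_Ioo, ← himage, integral_image_eq_integral_abs_deriv_smul
      measurableSet_Ioo (fun θ _ => (hasDerivAt_sin θ).hasDerivWithinAt)
      (injOn_sin.mono (Ioo_subset_Icc_self.trans hsub))]
  refine setIntegral_congr_fun measurableSet_Ioo fun θ hθ => ?_
  have hcos : 0 < cos θ := cos_pos_of_mem_Ioo ⟨by linarith [hθ.1, pi_pos], hθ.2⟩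
  rw [← cos_sq', sqrt_sq hcos.le, abs_of_pos hcos, smul_eq_mul, mul_div_cancel₀ _ hcos.ne']

noncomputable def ellipticIntegral (s x : ℝ) : ℝ :=
  ∫ θ in (0 : ℝ)..π / 2, (1 - x * sin θ ^ 2) ^ s

theorem one_sub_mul_sin_sq_pos {x : ℝ} (hx : x < 1) (θ : ℝ) : 0 < 1 - x * sin θ ^ 2 := by
  rcases le_or_gt x 0 with h | h
  · nlinarith [sq_nonneg (sin θ)]
  · nlinarith [sin_sq_le_one θ]

theorem continuous_one_sub_mul_sin_sq_rpow {x : ℝ} (hx : x < 1) (s : ℝ) :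
    Continuous fun θ => (1 - x * sin θ ^ 2) ^ s :=
  (by fun_prop : Continuous fun θ => 1 - x * sin θ ^ 2).rpow_const
    fun θ => .inl (one_sub_mul_sin_sq_pos hx θ).ne'

theorem intervalIntegrable_one_sub_mul_sin_sq_rpow {x : ℝ} (hx : x < 1) (s a b : ℝ) :
    IntervalIntegrable (fun θ => (1 - x * sin θ ^ 2) ^ s) volume a b :=
  (continuous_one_sub_mul_sin_sq_rpow hx s).intervalIntegrable a b

theorem Kell_eq_ellipticIntegral {x : ℝ} (hx : x ≤ 1) :
    Kell x = ellipticIntegral (-1 / 2) x := by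
  rw [ellipticIntegral, ← integral_div_sqrt_one_sub_sq_eq_integral_comp_sin
    fun t => (1 - x * t ^ 2) ^ (-1 / 2 : ℝ)]
  refine integral_congr fun t ht => ?_
  rw [uIcc_of_le zero_le_one] at ht
  have ht2 : t ^ 2 ≤ 1 := by nlinarith [ht.1, ht.2]
  have hw : 0 ≤ 1 - x * t ^ 2 := by nlinarith
  rw [sqrt_mul (by linarith), neg_div, rpow_neg hw, ← sqrt_eq_rpow, one_div, mul_comm, mul_inv,
    div_eq_mul_inv]

theorem Eell_eq_ellipticIntegral : Eell = ellipticIntegral (1 / 2) := by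
  ext x
  rw [Eell, ellipticIntegral, ← integral_div_sqrt_one_sub_sq_eq_integral_comp_sin
    fun t => (1 - x * t ^ 2) ^ (1 / 2 : ℝ)]
  simp only [sqrt_eq_rpow]

theorem hasDerivAt_ellipticIntegral_under_integral (s : ℝ) {x : ℝ} (hx : x < 1) :
    HasDerivAt (ellipticIntegral s)
      (∫ θ in (0 : ℝ)..π / 2, -(s * sin θ ^ 2 * (1 - x * sin θ ^ 2) ^ (s - 1))) x := by
  have hbase : ∀ p ∈ Icc (x - 1) ((1 + x) / 2) ×ˢ [[0, π / 2]], 1 - p.1 * sin p.2 ^ 2 ≠ 0 :=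
    fun p hp => (one_sub_mul_sin_sq_pos (by linarith [hp.1.2]) p.2).ne'
  have hcont : Continuous fun p : ℝ × ℝ => 1 - p.1 * sin p.2 ^ 2 := by fun_prop
  refine hasDerivAt_intervalIntegral_of_continuousOn (F := fun y θ => (1 - y * sin θ ^ 2) ^ s)
    (F' := fun y θ => -(s * sin θ ^ 2 * (1 - y * sin θ ^ 2) ^ (s - 1)))
    (Icc_mem_nhds (by linarith) (by linarith)) isCompact_Icc
    (hcont.continuousOn.rpow_const fun p hp => .inl (hbase p hp))
    (((by fun_prop : Continuous fun p : ℝ × ℝ => s * sin p.2 ^ 2).continuousOn.mul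
      (hcont.continuousOn.rpow_const fun p hp => .inl (hbase p hp))).neg) fun y hy θ _ => ?_
  have hy₁ : y < 1 := by linarith [hy.2]
  exact ((((hasDerivAt_id y).mul_const (sin θ ^ 2)).const_sub 1).rpow_const
    (.inl (one_sub_mul_sin_sq_pos hy₁ θ).ne')).congr_deriv (by simp only [id]; ring)

theorem hasDerivAt_ellipticIntegral (s : ℝ) {x : ℝ} (hx₀ : x ≠ 0) (hx₁ : x < 1) :
    HasDerivAt (ellipticIntegral s)
      (s * (ellipticIntegral s x - ellipticIntegral (s - 1) x) / x) x := by
  refine (hasDerivAt_ellipticIntegral_under_integral s hx₁).congr_deriv ?_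
  -- `x sin²θ = 1 - w` with `w = 1 - x sin²θ`, so `x sin²θ w^(s-1) = w^(s-1) - w^s`.
  have hpoint : ∀ θ, -(s * sin θ ^ 2 * (1 - x * sin θ ^ 2) ^ (s - 1))
      = s * ((1 - x * sin θ ^ 2) ^ s - (1 - x * sin θ ^ 2) ^ (s - 1)) / x := fun θ => by
    have hw₀ := (one_sub_mul_sin_sq_pos hx₁ θ).ne'
    rw [rpow_sub_one hw₀]
    generalize hw : 1 - x * sin θ ^ 2 = w at hw₀ ⊢
    field_simp
    linear_combination s * w ^ s * hw
  simp_rw [hpoint, intervalIntegral.integral_div, intervalIntegral.integral_const_mul,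
    intervalIntegral.integral_sub (intervalIntegrable_one_sub_mul_sin_sq_rpow hx₁ _ _ _)
      (intervalIntegrable_one_sub_mul_sin_sq_rpow hx₁ _ _ _), ellipticIntegral]

theorem hasDerivAt_sin_mul_cos_mul_rpow {x : ℝ} (hx : x < 1) (θ : ℝ) :
    HasDerivAt (fun θ => sin θ * cos θ * (1 - x * sin θ ^ 2) ^ (-1 / 2 : ℝ))
      ((1 - 2 * sin θ ^ 2 + x * sin θ ^ 4) * (1 - x * sin θ ^ 2) ^ (-3 / 2 : ℝ)) θ := by
  have hw := one_sub_mul_sin_sq_pos hx θ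
  have hpow := ((((hasDerivAt_sin θ).fun_pow 2).const_mul x).const_sub 1).rpow_const
    (p := (-1 / 2 : ℝ)) (.inl hw.ne')
  refine (((hasDerivAt_sin θ).fun_mul (hasDerivAt_cos θ)).fun_mul hpow).congr_deriv ?_
  have hhalf : (1 - x * sin θ ^ 2) ^ (-1 / 2 : ℝ)
      = (1 - x * sin θ ^ 2) * (1 - x * sin θ ^ 2) ^ (-3 / 2 : ℝ) := by
    rw [← rpow_one_add' hw.le (by norm_num)]; norm_num
  rw [show (-1 / 2 - 1 : ℝ) = -3 / 2 by norm_num, hhalf]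
  push_cast
  linear_combination (1 - x * sin θ ^ 2) ^ (-3 / 2 : ℝ) * sin_sq_add_cos_sq θ

theorem one_sub_mul_ellipticIntegral_neg_three_halves {x : ℝ} (hx : x < 1) :
    (1 - x) * ellipticIntegral (-3 / 2) x = ellipticIntegral (1 / 2) x := by
  have hftc : ∫ θ in (0 : ℝ)..π / 2,
      (1 - 2 * sin θ ^ 2 + x * sin θ ^ 4) * (1 - x * sin θ ^ 2) ^ (-3 / 2 : ℝ) = 0 := by
    rw [integral_eq_sub_of_hasDerivAt (fun θ _ => hasDerivAt_sin_mul_cos_mul_rpow hx θ)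
      (((by fun_prop : Continuous fun θ => 1 - 2 * sin θ ^ 2 + x * sin θ ^ 4).fun_mul
        (continuous_one_sub_mul_sin_sq_rpow hx _)).intervalIntegrable _ _)]
    simp
  have hpoint : ∀ θ, (1 - x) * (1 - x * sin θ ^ 2) ^ (-3 / 2 : ℝ)
        - (1 - x * sin θ ^ 2) ^ (1 / 2 : ℝ)
      = -x * ((1 - 2 * sin θ ^ 2 + x * sin θ ^ 4) * (1 - x * sin θ ^ 2) ^ (-3 / 2 : ℝ)) := by
    intro θ
    rw [show (1 / 2 : ℝ) = 2 + -3 / 2 by norm_num, rpow_add (one_sub_mul_sin_sq_pos hx θ),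
      rpow_two]
    ring
  rw [← sub_eq_zero, ellipticIntegral, ellipticIntegral, ← intervalIntegral.integral_const_mul,
    ← intervalIntegral.integral_sub
      ((intervalIntegrable_one_sub_mul_sin_sq_rpow hx _ _ _).const_mul _)
      (intervalIntegrable_one_sub_mul_sin_sq_rpow hx _ _ _)]
  simp_rw [hpoint, intervalIntegral.integral_const_mul, hftc, mul_zero]

theorem ellipticIntegral_apply_zero (s : ℝ) : ellipticIntegral s 0 = π / 2 := by
  simp [ellipticIntegral]

theorem ellipticIntegral_half_one : ellipticIntegral (1 / 2) 1 = 1 := by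
  have hcos : EqOn (fun θ => (1 - 1 * sin θ ^ 2) ^ (1 / 2 : ℝ)) cos [[0, π / 2]] := by
    intro θ hθ
    rw [uIcc_of_le (by positivity)] at hθ
    dsimp only
    rw [one_mul, ← cos_sq', ← sqrt_eq_rpow,
      sqrt_sq (cos_nonneg_of_mem_Icc ⟨by linarith [hθ.1, pi_pos], hθ.2⟩)]
  rw [ellipticIntegral, integral_congr hcos, integral_cos, sin_pi_div_two, sin_zero, sub_zero]

theorem continuous_ellipticIntegral {s : ℝ} (hs : 0 ≤ s) : Continuous (ellipticIntegral s) :=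
  continuous_parametric_intervalIntegral_of_continuous'
    ((by fun_prop : Continuous fun p : ℝ × ℝ => 1 - p.1 * sin p.2 ^ 2).rpow_const
      fun _ => .inr hs) _ _

theorem ellipticIntegral_neg_half_pos {x : ℝ} (hx : x < 1) : 0 < ellipticIntegral (-1 / 2) x :=
  intervalIntegral_pos_of_pos_on (intervalIntegrable_one_sub_mul_sin_sq_rpow hx _ _ _)
    (fun θ _ => rpow_pos_of_pos (one_sub_mul_sin_sq_pos hx θ) _) (by positivity)

theorem ellipticIntegral_neg_half_le {x : ℝ} (hx₀ : 0 ≤ x) (hx₁ : x < 1) :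
    ellipticIntegral (-1 / 2) x ≤ π / (2 * √(1 - x)) := by
  have hpoint : ∀ θ ∈ Icc 0 (π / 2), (1 - x * sin θ ^ 2) ^ (-1 / 2 : ℝ) ≤ (√(1 - x))⁻¹ := by
    intro θ _
    rw [sqrt_eq_rpow, ← rpow_neg (by linarith), neg_div, ← neg_div]
    exact rpow_le_rpow_of_nonpos (by linarith) (by nlinarith [sin_sq_le_one θ]) (by norm_num)
  calc ellipticIntegral (-1 / 2) x ≤ ∫ _ in (0 : ℝ)..π / 2, (√(1 - x))⁻¹ :=
        integral_mono_on (by positivity) (intervalIntegrable_one_sub_mul_sin_sq_rpow hx₁ _ _ _)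
          intervalIntegrable_const hpoint
    _ = π / (2 * √(1 - x)) := by simp; ring

theorem rpow_half_eq_mul_rpow_neg_half {w : ℝ} (hw : 0 < w) :
    w ^ (1 / 2 : ℝ) = w * w ^ (-1 / 2 : ℝ) := by
  rw [← rpow_one_add' hw.le (by norm_num)]; norm_num

theorem ellipticIntegral_half_le_neg_half {x : ℝ} (hx₀ : 0 ≤ x) (hx₁ : x < 1) :
    ellipticIntegral (1 / 2) x ≤ ellipticIntegral (-1 / 2) x := by
  refine integral_mono_on (by positivity) (intervalIntegrable_one_sub_mul_sin_sq_rpow hx₁ _ _ _)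
    (intervalIntegrable_one_sub_mul_sin_sq_rpow hx₁ _ _ _) fun θ _ => ?_
  have hw := one_sub_mul_sin_sq_pos hx₁ θ
  rw [rpow_half_eq_mul_rpow_neg_half hw]
  exact mul_le_of_le_one_left (rpow_nonneg hw.le _) (by nlinarith [sq_nonneg (sin θ)])

theorem one_sub_mul_ellipticIntegral_neg_half_le {x : ℝ} (hx₀ : 0 ≤ x) (hx₁ : x < 1) :
    (1 - x) * ellipticIntegral (-1 / 2) x ≤ ellipticIntegral (1 / 2) x := by
  rw [ellipticIntegral, ← intervalIntegral.integral_const_mul]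
  refine integral_mono_on (by positivity)
    ((intervalIntegrable_one_sub_mul_sin_sq_rpow hx₁ _ _ _).const_mul _)
    (intervalIntegrable_one_sub_mul_sin_sq_rpow hx₁ _ _ _) fun θ _ => ?_
  have hw := one_sub_mul_sin_sq_pos hx₁ θ
  rw [rpow_half_eq_mul_rpow_neg_half hw]
  exact mul_le_mul_of_nonneg_right (by nlinarith [sin_sq_le_one θ]) (rpow_nonneg hw.le _)

theorem abs_ellipticIntegral_one_sub_mul_sub_le {y : ℝ} (hy : y ∈ Ioo (0 : ℝ) 1) :
    |ellipticIntegral (-1 / 2) (1 - y)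
        * (ellipticIntegral (1 / 2) y - ellipticIntegral (-1 / 2) y)|
      ≤ √y * (π / 2) * ellipticIntegral (-1 / 2) y := by
  obtain ⟨hy₀, hy₁⟩ := hy
  have hK₁ := ellipticIntegral_neg_half_le (x := 1 - y) (by linarith) (by linarith)
  rw [sub_sub_cancel] at hK₁
  have hK₁_pos := ellipticIntegral_neg_half_pos (x := 1 - y) (by linarith)
  have hK_pos := ellipticIntegral_neg_half_pos hy₁
  have hEK := ellipticIntegral_half_le_neg_half hy₀.le hy₁
  have hKE := one_sub_mul_ellipticIntegral_neg_half_le hy₀.le hy₁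
  have hyK₁ : y * ellipticIntegral (-1 / 2) (1 - y) ≤ √y * (π / 2) := by
    have hsy : 0 < √y := sqrt_pos.2 hy₀
    calc y * ellipticIntegral (-1 / 2) (1 - y) ≤ y * (π / (2 * √y)) := by gcongr
      _ = √y * (π / 2) := by field_simp; rw [sq_sqrt hy₀.le]
  rw [abs_mul, abs_of_pos hK₁_pos, abs_of_nonpos (by linarith)]
  nlinarith

theorem Kell_eventuallyEq_ellipticIntegral {x : ℝ} (hx : x < 1) :
    Kell =ᶠ[𝓝 x] ellipticIntegral (-1 / 2) :=
  eventually_of_mem (Iic_mem_nhds hx) fun _ hy => Kell_eq_ellipticIntegral hy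

theorem hasDerivAt_Kell {x : ℝ} (hx₀ : x ≠ 0) (hx₁ : x < 1) :
    HasDerivAt Kell ((Eell x - (1 - x) * Kell x) / (2 * x * (1 - x))) x := by
  refine ((hasDerivAt_ellipticIntegral (-1 / 2) hx₀ hx₁).congr_of_eventuallyEq
    (Kell_eventuallyEq_ellipticIntegral hx₁)).congr_deriv ?_
  have h₁ : 1 - x ≠ 0 := by linarith
  rw [Kell_eq_ellipticIntegral hx₁.le, Eell_eq_ellipticIntegral,
    ← one_sub_mul_ellipticIntegral_neg_three_halves hx₁,
    show (-1 / 2 - 1 : ℝ) = -3 / 2 by norm_num]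
  field_simp
  ring

theorem hasDerivAt_Eell {x : ℝ} (hx₀ : x ≠ 0) (hx₁ : x < 1) :
    HasDerivAt Eell ((Eell x - Kell x) / (2 * x)) x := by
  rw [Eell_eq_ellipticIntegral, Kell_eq_ellipticIntegral hx₁.le]
  convert hasDerivAt_ellipticIntegral (1 / 2) hx₀ hx₁ using 1
  norm_num
  ring

theorem continuousAt_Kell {x : ℝ} (hx : x < 1) : ContinuousAt Kell x :=
  (hasDerivAt_ellipticIntegral_under_integral _ hx).continuousAt.congr
    (Kell_eventuallyEq_ellipticIntegral hx).symm

theorem continuous_Eell : Continuous Eell :=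
  Eell_eq_ellipticIntegral ▸ continuous_ellipticIntegral (by norm_num)

noncomputable def legendreForm (x : ℝ) : ℝ :=
  Eell x * Kell (1 - x) + Eell (1 - x) * Kell x - Kell x * Kell (1 - x)

theorem hasDerivAt_legendreForm {x : ℝ} (hx : x ∈ Ioo (0 : ℝ) 1) :
    HasDerivAt legendreForm 0 x := by
  obtain ⟨hx₀, hx₁⟩ := hx
  have h₁ : 1 - x ≠ 0 := by linarith
  have hK := hasDerivAt_Kell hx₀.ne' hx₁
  have hE := hasDerivAt_Eell hx₀.ne' hx₁
  have hK₁ := (hasDerivAt_Kell h₁ (by linarith)).comp_const_sub 1 x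
  have hE₁ := (hasDerivAt_Eell h₁ (by linarith)).comp_const_sub 1 x
  refine (((hE.mul hK₁).add (hE₁.mul hK)).sub (hK.mul hK₁)).congr_deriv ?_
  rw [sub_sub_cancel]
  field_simp
  ring

theorem tendsto_legendreForm : Tendsto legendreForm (𝓝[>] 0) (𝓝 (π / 2)) := by
  have hK : Tendsto Kell (𝓝[>] 0) (𝓝 (π / 2)) := by
    have := (continuousAt_Kell one_pos).tendsto
    rw [Kell_eq_ellipticIntegral zero_le_one, ellipticIntegral_apply_zero] at this
    exact this.mono_left nhdsWithin_le_nhds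
  have hE₁ : Tendsto (fun y => Eell (1 - y)) (𝓝[>] 0) (𝓝 1) := by
    refine ((continuous_Eell.comp (continuous_sub_left 1)).tendsto' 0 1 ?_).mono_left
      nhdsWithin_le_nhds
    rw [comp_apply, sub_zero, Eell_eq_ellipticIntegral, ellipticIntegral_half_one]
  have hsmall : Tendsto (fun y => Kell (1 - y) * (Eell y - Kell y)) (𝓝[>] 0) (𝓝 0) := by
    refine squeeze_zero_norm' ?_ (by simpa using
      (((continuous_sqrt.tendsto 0).mono_left nhdsWithin_le_nhds).mul_const (π / 2)).mul hK)
    filter_upwards [Ioo_mem_nhdsGT one_pos] with y hy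
    rw [norm_eq_abs, Kell_eq_ellipticIntegral (by linarith [hy.1]),
      Kell_eq_ellipticIntegral hy.2.le, Eell_eq_ellipticIntegral]
    exact abs_ellipticIntegral_one_sub_mul_sub_le hy
  have hsplit :
      legendreForm = fun y => Kell (1 - y) * (Eell y - Kell y) + Eell (1 - y) * Kell y := by
    ext y
    rw [legendreForm]
    ring
  simpa [hsplit] using hsmall.add (hE₁.mul hK)

theorem legendreForm_eq {x : ℝ} (hx : x ∈ Ioo (0 : ℝ) 1) : legendreForm x = π / 2 := by
  have hconst : ∀ y ∈ Ioo (0 : ℝ) 1, legendreForm y = legendreForm x := fun y hy =>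
    isOpen_Ioo.is_const_of_deriv_eq_zero isPreconnected_Ioo
      (fun z hz => (hasDerivAt_legendreForm hz).differentiableAt.differentiableWithinAt)
      (fun z hz => (hasDerivAt_legendreForm hz).deriv) hy hx
  refine tendsto_nhds_unique (tendsto_const_nhds.congr' ?_) tendsto_legendreForm
  filter_upwards [Ioo_mem_nhdsGT one_pos] with y hy using (hconst y hy).symm

/-- For `x ∈ (0,1)`,
`(d/dx)(K(1−x)/K(x)) = −(π/4)/(x(1−x)K(x)²)`. -/
theorem deriv_K_ratio :
    ∀ x ∈ Set.Ioo (0 : ℝ) 1,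
      HasDerivAt (fun y => Kell (1 - y) / Kell y)
        (-(π / 4) / (x * (1 - x) * (Kell x) ^ 2)) x := by
  rintro x ⟨hx₀, hx₁⟩
  have h₁ : 1 - x ≠ 0 := by linarith
  have hK : Kell x ≠ 0 :=
    (Kell_eq_ellipticIntegral hx₁.le ▸ ellipticIntegral_neg_half_pos hx₁).ne'
  have hlegendre := legendreForm_eq ⟨hx₀, hx₁⟩
  rw [legendreForm] at hlegendre
  refine (((hasDerivAt_Kell h₁ (by linarith)).comp_const_sub 1 x).div
    (hasDerivAt_Kell hx₀.ne' hx₁) hK).congr_deriv ?_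
  rw [sub_sub_cancel]
  field_simp
  linear_combination -4 * hlegendre

end Stmt17
end
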